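/- arXiv:2403.02792 — 8 statements merged into one kernel-verified Lean document; each statement's English description precedes it below -/
import Mathlib

section
/- For every positive integer n and integer k ≥ 2, and any arithmetic function g, one has ∑_{d₁⋯d_k = n} g(gcd(d₁,…,d_k)) = ∑_{a^k · b = n} (μ * g)(a) · τ_k(b), where μ * g denotes Dirichlet convolution and τ_k is the k-fold divisor function. -/
/-!
Write `h = μ * g`, so that `g m = ∑_{a ∣ m} h a` for `m > 0` by Möbius inversion. Expanding
`g (gcd d)` this way turns the left side into a sum of `h a` over pairs `(d, a)` with
`∏ dᵢ = n` and `a ∣ gcd d`. Writing `d = a • e` identifies these pairs with the pairs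
`((a, b), e)` where `a ^ k * b = n` and `∏ eᵢ = b`, and summing `h a` over the latter gives the
right side.
-/

open Finset ArithmeticFunction

theorem Fin.pow_mul_prod {M : Type*} [CommMonoid M] {k : ℕ} (a : M) (e : Fin k → M) :
    a ^ k * ∏ i, e i = ∏ i, a * e i := by
  simpa using pow_card_mul_prod (s := univ) (f := e) (b := a)

namespace Nat

theorem pow_mul_prod_div {k a : ℕ} {d : Fin k → ℕ} (h : ∀ i, a ∣ d i) :
    a ^ k * ∏ i, d i / a = ∏ i, d i := by
  rw [Fin.pow_mul_prod]
  exact prod_congr rfl fun i _ => Nat.mul_div_cancel' (h i)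

theorem finMulAntidiag_eq_piFinset_filter {k : ℕ} (hk : k ≠ 0) (n : ℕ) :
    finMulAntidiag k n =
      {f ∈ Fintype.piFinset fun _ : Fin k => n.divisors | ∏ i, f i = n} := by
  rcases eq_or_ne n 0 with rfl | hn
  · have : Nonempty (Fin k) := Fin.pos_iff_nonempty.mp (Nat.pos_of_ne_zero hk)
    simp
  · exact finMulAntidiag_eq_piFinset_divisors_filter dvd_rfl hn

theorem gcd_ne_zero_of_mem_finMulAntidiag {k n : ℕ} (hk : k ≠ 0) {d : Fin k → ℕ}
    (hd : d ∈ finMulAntidiag k n) : univ.gcd d ≠ 0 := fun h =>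
  ne_zero_of_mem_finMulAntidiag hd ⟨0, Nat.pos_of_ne_zero hk⟩
    (Finset.gcd_eq_zero_iff.mp h _ (mem_univ _))

end Nat

theorem sum_divisors_sum_moebius_mul {R : Type*} [Ring R] (g : ℕ → R) {m : ℕ} (hm : 0 < m) :
    ∑ a ∈ m.divisors, ∑ q ∈ a.divisorsAntidiagonal, (moebius q.1 : R) * g q.2 = g m := by
  refine sum_eq_iff_sum_smul_moebius_eq.mpr (fun a _ => ?_) m hm
  simp only [zsmul_eq_mul]

theorem sum_finMulAntidiag_sum_divisors_gcd {M : Type*} [AddCommMonoid M] (f : ℕ → M)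
    {k : ℕ} (hk : k ≠ 0) (n : ℕ) :
    ∑ d ∈ Nat.finMulAntidiag k n, ∑ a ∈ (univ.gcd d).divisors, f a
      = ∑ p ∈ (n.divisors ×ˢ n.divisors).filter (fun p => p.1 ^ k * p.2 = n),
          ∑ _e ∈ Nat.finMulAntidiag k p.2, f p.1 := by
  have mem_pairs : ∀ a b, (a, b) ∈ (n.divisors ×ˢ n.divisors).filter
      (fun p => p.1 ^ k * p.2 = n) ↔ a ^ k * b = n ∧ n ≠ 0 := by
    intro a b
    simp only [mem_filter, mem_product, Nat.mem_divisors]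
    constructor
    · rintro ⟨⟨⟨-, hn⟩, -⟩, h⟩
      exact ⟨h, hn⟩
    · rintro ⟨rfl, hn⟩
      exact ⟨⟨⟨(dvd_pow_self a hk).mul_right b, hn⟩, Dvd.intro_left _ rfl, hn⟩, rfl⟩
  rw [sum_sigma', sum_sigma']
  refine sum_nbij' (fun x => ⟨(x.2, ∏ i, x.1 i / x.2), fun i => x.1 i / x.2⟩)
    (fun y => ⟨fun i => y.1.1 * y.2 i, y.1.1⟩) ?_ ?_ ?_ ?_ (fun _ _ => rfl)
  · rintro ⟨d, a⟩ hx
    simp only [mem_sigma, Nat.mem_finMulAntidiag, Nat.mem_divisors, Finset.dvd_gcd_iff,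
      mem_univ, true_implies] at hx
    obtain ⟨⟨rfl, hn⟩, had, -⟩ := hx
    have key := Nat.pow_mul_prod_div had
    simp only [mem_sigma, mem_pairs, Nat.mem_finMulAntidiag]
    exact ⟨⟨key, hn⟩, trivial, fun h => hn (by rw [← key, h, mul_zero])⟩
  · rintro ⟨⟨a, b⟩, e⟩ hy
    simp only [mem_sigma, mem_pairs, Nat.mem_finMulAntidiag] at hy
    obtain ⟨⟨rfl, hn⟩, he, -⟩ := hy
    have hae : (fun i => a * e i) ∈ Nat.finMulAntidiag k (a ^ k * b) := by
      rw [Nat.mem_finMulAntidiag, ← Fin.pow_mul_prod, he]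
      exact ⟨rfl, hn⟩
    simp only [mem_sigma, Nat.mem_divisors]
    exact ⟨hae, Finset.dvd_gcd fun i _ => dvd_mul_right a (e i),
      Nat.gcd_ne_zero_of_mem_finMulAntidiag hk hae⟩
  · rintro ⟨d, a⟩ hx
    simp only [mem_sigma, Nat.mem_divisors, Finset.dvd_gcd_iff, mem_univ, true_implies] at hx
    simp only [Sigma.mk.injEq, heq_eq_eq, and_true]
    exact funext fun i => Nat.mul_div_cancel' (hx.2.1 i)
  · rintro ⟨⟨a, b⟩, e⟩ hy
    simp only [mem_sigma, mem_pairs, Nat.mem_finMulAntidiag] at hy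
    obtain ⟨⟨rfl, hn⟩, he, -⟩ := hy
    have ha : 0 < a := Nat.pos_of_ne_zero fun h => hn (by simp [h, hk])
    simp only [Nat.mul_div_cancel_left _ ha, he]

theorem stmt0_general {R : Type*} [CommRing R] (g : ℕ → R) (n k : ℕ) (hk : 2 ≤ k) :
    ∑ d ∈ (Fintype.piFinset fun _ : Fin k => n.divisors).filter (fun f => ∏ i, f i = n),
        g (Finset.univ.gcd d)
    = ∑ p ∈ (n.divisors ×ˢ n.divisors).filter (fun p => p.1 ^ k * p.2 = n),
        (∑ q ∈ p.1.divisorsAntidiagonal, (moebius q.1 : R) * g q.2) *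
          (((Fintype.piFinset fun _ : Fin k => p.2.divisors).filter
              (fun f => ∏ i, f i = p.2)).card : R) := by
  have hk0 : k ≠ 0 := by omega
  simp only [← Nat.finMulAntidiag_eq_piFinset_filter hk0]
  calc ∑ d ∈ Nat.finMulAntidiag k n, g (univ.gcd d)
      = ∑ d ∈ Nat.finMulAntidiag k n, ∑ a ∈ (univ.gcd d).divisors,
          ∑ q ∈ a.divisorsAntidiagonal, (moebius q.1 : R) * g q.2 :=
        sum_congr rfl fun d hd => (sum_divisors_sum_moebius_mul g
          (Nat.pos_of_ne_zero (Nat.gcd_ne_zero_of_mem_finMulAntidiag hk0 hd))).symm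
    _ = _ := by
        rw [sum_finMulAntidiag_sum_divisors_gcd _ hk0]
        simp only [sum_const, nsmul_eq_mul, mul_comm]

/-- `∑_{d₁⋯d_k = n} g(gcd(d₁,…,d_k)) = ∑_{a^k b = n} (μ*g)(a) τ_k(b)`. -/
theorem stmt0 {R : Type*} [CommRing R] (g : ℕ → R) (n k : ℕ) (hn : 0 < n) (hk : 2 ≤ k) :
    ∑ d ∈ (Fintype.piFinset fun _ : Fin k => n.divisors).filter (fun f => ∏ i, f i = n),
        g (Finset.univ.gcd d)
    = ∑ p ∈ (n.divisors ×ˢ n.divisors).filter (fun p => p.1 ^ k * p.2 = n),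
        (∑ q ∈ p.1.divisorsAntidiagonal, (moebius q.1 : R) * g q.2) *
          (((Fintype.piFinset fun _ : Fin k => p.2.divisors).filter
              (fun f => ∏ i, f i = p.2)).card : R) :=
  stmt0_general g n k hk
end

section
/- For every real x ≥ 1 and integer k ≥ 2, ∑_{n ≤ x} f_{μ,k}(n) = ∑_{m ≤ x^{1/k}} (μ * μ)(m) · ∑_{n ≤ x/m^k} τ_k(n), where f_{μ,k}(n) = ∑_{d₁⋯d_k = n} μ(gcd(d₁,…,d_k)). -/
open Finset ArithmeticFunction

/-- `f_{μ,k}(n) = ∑_{d₁⋯d_k = n} μ(gcd(d₁,…,d_k))`. -/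
def fmuk (k n : ℕ) : ℤ :=
  ∑ d ∈ (Fintype.piFinset fun _ : Fin k => n.divisors).filter (fun f => ∏ i, f i = n),
    moebius (Finset.univ.gcd d)

/-- `τ_k(n)`: the number of ordered `k`-tuples of positive integers with product `n`. -/
def tauk (k n : ℕ) : ℕ :=
  ((Fintype.piFinset fun _ : Fin k => n.divisors).filter (fun f => ∏ i, f i = n)).card

lemma moebius_eq_sum_divisors (g : ℕ) :
    (moebius g : ℤ) = ∑ m ∈ g.divisors, (moebius * moebius) m := by
  have h : ((moebius * moebius) * (ArithmeticFunction.zeta : ArithmeticFunction ℤ)) = moebius := by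
    rw [mul_assoc, moebius_mul_coe_zeta, mul_one]
  conv_lhs => rw [← h]
  rw [coe_mul_zeta_apply]

lemma fiber_sum {k : ℕ} (M : ℕ) (f : (Fin k → ℕ) → ℤ) :
    ∑ n ∈ Finset.Icc 1 M, ∑ d ∈ (Fintype.piFinset fun _ : Fin k => n.divisors).filter
        (fun d => ∏ i, d i = n), f d
    = ∑ d ∈ (Fintype.piFinset fun _ : Fin k => Finset.Icc 1 M).filter
        (fun d => ∏ i, d i ≤ M), f d := by
  rw [← Finset.sum_fiberwise_of_maps_to (g := fun d => ∏ i, d i) ?_ f]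
  · apply Finset.sum_congr rfl
    intro n hn
    simp only [Finset.mem_Icc] at hn
    apply Finset.sum_congr _ (fun _ _ => rfl)
    ext d
    simp only [Finset.mem_filter, Fintype.mem_piFinset, Finset.mem_Icc, Nat.mem_divisors]
    constructor
    · rintro ⟨h1, h3⟩
      refine ⟨⟨fun i => ⟨?_, ?_⟩, by omega⟩, h3⟩
      · obtain ⟨hd, hn0⟩ := h1 i
        have := Nat.pos_of_dvd_of_pos hd (by omega)
        omega
      · obtain ⟨hd, hn0⟩ := h1 i
        have := Nat.le_of_dvd (by omega) hd
        omega
    · rintro ⟨⟨h1, h2⟩, h3⟩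
      refine ⟨fun i => ⟨?_, by omega⟩, h3⟩
      rw [← h3]; exact Finset.dvd_prod_of_mem d (Finset.mem_univ i)
  · intro d hd
    simp only [Finset.mem_filter, Fintype.mem_piFinset, Finset.mem_Icc] at hd ⊢
    refine ⟨Finset.one_le_prod' (fun i _ => (hd.1 i).1), hd.2⟩

lemma tauk_sum (k M : ℕ) :
    ∑ n ∈ Finset.Icc 1 M, (tauk k n : ℤ)
    = (((Fintype.piFinset fun _ : Fin k => Finset.Icc 1 M).filter
        (fun d => ∏ i, d i ≤ M)).card : ℤ) := by
  have := fiber_sum (k := k) M (fun _ => (1 : ℤ))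
  simp only [Finset.sum_const, nsmul_eq_mul, mul_one] at this
  simpa [tauk] using this

lemma count_bij {k : ℕ} (m M : ℕ) (hm : 1 ≤ m) :
    ((Fintype.piFinset fun _ : Fin k => Finset.Icc 1 M).filter
        (fun d => (∏ i, d i ≤ M) ∧ ∀ i, m ∣ d i)).card
    = ((Fintype.piFinset fun _ : Fin k => Finset.Icc 1 (M / m ^ k)).filter
        (fun e => ∏ i, e i ≤ M / m ^ k)).card := by
  have hmk : 0 < m ^ k := Nat.pow_pos hm
  apply Finset.card_bij' (fun d _ => fun i => d i / m) (fun e _ => fun i => m * e i)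
  · intro d hd
    simp only [Finset.mem_filter, Fintype.mem_piFinset, Finset.mem_Icc] at hd ⊢
    obtain ⟨h1, h2, h3⟩ := hd
    have hde : ∀ i, d i = m * (d i / m) := fun i => (Nat.mul_div_cancel' (h3 i)).symm
    have hprod : ∏ i, d i = m ^ k * ∏ i, d i / m := by
      calc ∏ i, d i = ∏ i, m * (d i / m) := by exact Finset.prod_congr rfl fun i _ => hde i
        _ = m ^ k * ∏ i, d i / m := by
            rw [Finset.prod_mul_distrib, Finset.prod_const, Finset.card_univ, Fintype.card_fin]
    have hle : ∏ i, d i / m ≤ M / m ^ k := by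
      rw [Nat.le_div_iff_mul_le hmk, mul_comm, ← hprod]; exact h2
    have hone : ∀ i, 1 ≤ d i / m := by
      intro i
      have : m ≤ d i := Nat.le_of_dvd (by have := (h1 i).1; omega) (h3 i)
      exact Nat.one_le_div_iff hm |>.mpr this
    refine ⟨fun i => ⟨hone i, ?_⟩, hle⟩
    calc d i / m ≤ ∏ j, d j / m :=
          Finset.single_le_prod' (fun j _ => hone j) (Finset.mem_univ i)
      _ ≤ M / m ^ k := hle
  · intro e he
    simp only [Finset.mem_filter, Fintype.mem_piFinset, Finset.mem_Icc] at he ⊢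
    obtain ⟨h1, h2⟩ := he
    have hprod : ∏ i, m * e i = m ^ k * ∏ i, e i := by
      rw [Finset.prod_mul_distrib, Finset.prod_const, Finset.card_univ, Fintype.card_fin]
    have h2' : m ^ k * ∏ i, e i ≤ M := by
      rw [mul_comm, ← Nat.le_div_iff_mul_le hmk]; exact h2
    have hone : ∀ i, 1 ≤ m * e i := fun i => Nat.one_le_iff_ne_zero.mpr
      (by have := (h1 i).1; positivity)
    refine ⟨fun i => ⟨hone i, ?_⟩, ?_, fun i => Dvd.intro _ rfl⟩
    · calc m * e i ≤ ∏ j, m * e j :=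
            Finset.single_le_prod' (fun j _ => hone j) (Finset.mem_univ i)
        _ = m ^ k * ∏ i, e i := hprod
        _ ≤ M := h2'
    · rw [hprod]; exact h2'
  · intro d hd
    simp only [Finset.mem_filter, Fintype.mem_piFinset, Finset.mem_Icc] at hd
    funext i
    exact Nat.mul_div_cancel' (hd.2.2 i)
  · intro e he
    funext i
    exact Nat.mul_div_cancel_left _ (by omega)

/-- `∑_{n ≤ x} f_{μ,k}(n) = ∑_{m ≤ x^{1/k}} (μ*μ)(m) ∑_{n ≤ x/m^k} τ_k(n)`. -/
theorem stmt2 (x : ℝ) (hx : 1 ≤ x) (k : ℕ) (hk : 2 ≤ k) :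
    ∑ n ∈ Finset.Icc 1 ⌊x⌋₊, fmuk k n
    = ∑ m ∈ Finset.Icc 1 ⌊x ^ ((k : ℝ)⁻¹)⌋₊,
        (moebius * moebius) m * ∑ n ∈ Finset.Icc 1 ⌊x / (m : ℝ) ^ k⌋₊, (tauk k n : ℤ) := by
  have hk0 : (k : ℝ) ≠ 0 := by positivity
  set N := ⌊x⌋₊ with hNdef
  set Mb := ⌊x ^ ((k : ℝ)⁻¹)⌋₊ with hMdef
  have hN1 : 1 ≤ N := Nat.le_floor (by exact_mod_cast hx)
  have hNx : (N : ℝ) ≤ x := Nat.floor_le (by linarith)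
  -- characterize membership in Icc 1 Mb : m ≤ Mb ↔ (m:ℝ)^k ≤ x
  have hMb : ∀ m : ℕ, m ≤ Mb ↔ ((m : ℝ)) ^ k ≤ x := by
    intro m
    rw [hMdef, Nat.le_floor_iff (by positivity)]
    constructor
    · intro h
      calc ((m:ℝ))^k ≤ (x ^ ((k:ℝ)⁻¹))^k := by
            apply pow_le_pow_left₀ (by positivity) h
        _ = x := by
            rw [← Real.rpow_natCast (x ^ ((k:ℝ)⁻¹)) k, ← Real.rpow_mul (by linarith),
              inv_mul_cancel₀ hk0, Real.rpow_one]
    · intro h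
      calc (m:ℝ) = (((m:ℝ)) ^ k) ^ ((k:ℝ)⁻¹) := by
            rw [← Real.rpow_natCast (m:ℝ) k, ← Real.rpow_mul (by positivity),
              mul_inv_cancel₀ hk0, Real.rpow_one]
        _ ≤ x ^ ((k:ℝ)⁻¹) := Real.rpow_le_rpow (by positivity) h (by positivity)
  have hMN : Mb ≤ N := by
    have h2 : (Mb : ℝ) ^ k ≤ x := (hMb Mb).mp le_rfl
    have h3 : Mb ^ k ≤ N := Nat.le_floor (by exact_mod_cast h2)
    calc Mb ≤ Mb ^ k := Nat.le_self_pow (by omega) _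
      _ ≤ N := h3
  have hfloor : ∀ m : ℕ, ⌊x / (m : ℝ) ^ k⌋₊ = N / m ^ k := by
    intro m
    have hcast : ((m : ℝ)) ^ k = ((m ^ k : ℕ) : ℝ) := by push_cast; ring
    rw [hcast, Nat.floor_div_natCast, hNdef]
  set T := (Fintype.piFinset fun _ : Fin k => Finset.Icc 1 N).filter
      (fun d => ∏ i, d i ≤ N) with hT
  have key : ∀ d ∈ T, (moebius (Finset.univ.gcd d) : ℤ)
      = ∑ m ∈ Finset.Icc 1 N, if ∀ i, m ∣ d i then (moebius * moebius) m else 0 := by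
    intro d hd
    rw [hT] at hd
    simp only [Finset.mem_filter, Fintype.mem_piFinset, Finset.mem_Icc] at hd
    obtain ⟨h1, h2⟩ := hd
    let i0 : Fin k := ⟨0, by omega⟩
    have hg0 : Finset.univ.gcd d ≠ 0 := by
      intro h
      rw [Finset.gcd_eq_zero_iff] at h
      have := h i0 (Finset.mem_univ i0)
      have := (h1 i0).1
      omega
    rw [moebius_eq_sum_divisors, ← Finset.sum_filter]
    congr 1
    ext m
    simp only [Nat.mem_divisors, Finset.mem_filter, Finset.mem_Icc]
    constructor
    · rintro ⟨hdvd, -⟩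
      have hmd : ∀ i, m ∣ d i := fun i =>
        hdvd.trans (Finset.gcd_dvd (Finset.mem_univ i))
      have hm1 : 1 ≤ m := Nat.pos_of_dvd_of_pos (hmd i0) (by have := (h1 i0).1; omega)
      have hmN : m ≤ N := le_trans (Nat.le_of_dvd (by have := (h1 i0).1; omega) (hmd i0))
        (h1 i0).2
      exact ⟨⟨hm1, hmN⟩, hmd⟩
    · rintro ⟨-, hmd⟩
      exact ⟨Finset.dvd_gcd (fun i _ => hmd i), hg0⟩
  have step : ∀ m ∈ Finset.Icc 1 N,
      (∑ d ∈ T, if ∀ i, m ∣ d i then (moebius * moebius) m else 0)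
      = (moebius * moebius) m * ∑ n ∈ Finset.Icc 1 (N / m ^ k), (tauk k n : ℤ) := by
    intro m hm
    have hm1 : 1 ≤ m := (Finset.mem_Icc.mp hm).1
    rw [← Finset.sum_filter, Finset.sum_const, hT, Finset.filter_filter,
      tauk_sum, ← count_bij m N hm1, nsmul_eq_mul]
    ring
  calc ∑ n ∈ Finset.Icc 1 N, fmuk k n
      = ∑ d ∈ T, (moebius (Finset.univ.gcd d) : ℤ) := by
        simp only [fmuk]; exact fiber_sum N _
    _ = ∑ d ∈ T, ∑ m ∈ Finset.Icc 1 N,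
          (if ∀ i, m ∣ d i then (moebius * moebius) m else 0) :=
        Finset.sum_congr rfl key
    _ = ∑ m ∈ Finset.Icc 1 N, ∑ d ∈ T,
          (if ∀ i, m ∣ d i then (moebius * moebius) m else 0) := Finset.sum_comm
    _ = ∑ m ∈ Finset.Icc 1 N,
          (moebius * moebius) m * ∑ n ∈ Finset.Icc 1 (N / m ^ k), (tauk k n : ℤ) :=
        Finset.sum_congr rfl step
    _ = ∑ m ∈ Finset.Icc 1 Mb,
          (moebius * moebius) m * ∑ n ∈ Finset.Icc 1 (N / m ^ k), (tauk k n : ℤ) := by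
        refine (Finset.sum_subset (Finset.Icc_subset_Icc le_rfl hMN) ?_).symm
        intro m hm hm'
        simp only [Finset.mem_Icc] at hm hm'
        have hmMb : Mb < m := by omega
        have hxm : x < (m : ℝ) ^ k := by
          by_contra hc
          push_neg at hc
          exact absurd ((hMb m).mpr hc) (by omega)
        have hNm : N < m ^ k := by
          have : (N : ℝ) < ((m ^ k : ℕ) : ℝ) := by push_cast; linarith
          exact_mod_cast this
        rw [Nat.div_eq_of_lt hNm]
        simp
    _ = ∑ m ∈ Finset.Icc 1 Mb,
          (moebius * moebius) m * ∑ n ∈ Finset.Icc 1 ⌊x / (m : ℝ) ^ k⌋₊, (tauk k n : ℤ) := by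
        refine Finset.sum_congr rfl fun m _ => ?_
        rw [hfloor m]
end

section
/- The Dirichlet series of n ↦ ∑_{d₁⋯d_k = n} μ(gcd(d₁,…,d_k)) equals ζ(s)^k / ζ(ks)², i.e. for every complex s with Re(s) > 1, ∑_{n=1}^∞ f_{μ,k}(n)/n^s = ζ(s)^k / ζ(ks)², and the series converges absolutely. -/
open Finset ArithmeticFunction

section Aux

open LSeries
open scoped LSeries.notation

/-- The set of ordered `k`-tuples with product `n`. -/
private def Sk (k n : ℕ) : Finset (Fin k → ℕ) :=
  (Fintype.piFinset fun _ : Fin k => n.divisors).filter (fun f => ∏ i, f i = n)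

private lemma mem_Sk {k n : ℕ} (hn : n ≠ 0) {d : Fin k → ℕ} : d ∈ Sk k n ↔ ∏ i, d i = n := by
  simp only [Sk, mem_filter, Fintype.mem_piFinset, Nat.mem_divisors]
  refine ⟨fun h => h.2, fun h => ⟨fun i => ⟨h ▸ Finset.dvd_prod_of_mem d (mem_univ i), hn⟩, h⟩⟩

private lemma Sk_zero (k : ℕ) : Sk k 0 = ∅ := by
  ext d
  simp only [Sk, mem_filter, Fintype.mem_piFinset, Nat.divisors_zero, Finset.notMem_empty,
    iff_false, not_and]
  intro h hp
  obtain ⟨i, -, hi⟩ := Finset.prod_eq_zero_iff.mp hp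
  simpa using h i

/-- `Tc k n` is the number of ordered `k`-tuples with product `n`. -/
private def Tc (k n : ℕ) : ℕ := (Sk k n).card

private lemma Tc_eq_zeta_pow (k n : ℕ) : Tc k n = (zeta ^ k) n := by
  induction k generalizing n with
  | zero =>
    rw [pow_zero, one_apply]
    rcases eq_or_ne n 1 with rfl | hn
    · rw [if_pos rfl]
      have : Sk 0 1 = (Fintype.piFinset fun _ : Fin 0 => Nat.divisors 1) := by
        apply Finset.filter_true_of_mem
        intro d _
        simp
      rw [Tc, this, Fintype.card_piFinset]
      simp
    · rw [if_neg hn]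
      rw [Tc, Finset.card_eq_zero]
      ext d
      simp only [Sk, mem_filter, Finset.notMem_empty, iff_false, not_and]
      intro _
      simpa using hn ∘ Eq.symm ∘ (by simpa using ·)
  | succ k ih =>
    rcases eq_or_ne n 0 with rfl | hn
    · simp [Tc, Sk_zero, ArithmeticFunction.map_zero]
    rw [pow_succ, mul_apply]
    have hz : ∀ p ∈ n.divisorsAntidiagonal, (zeta ^ k) p.1 * zeta p.2 = Tc k p.1 := by
      intro p hp
      obtain ⟨h1, h2⟩ := Nat.mem_divisorsAntidiagonal.mp hp
      have hp2 : p.2 ≠ 0 := fun h => h2 (by rw [← h1, h, mul_zero])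
      rw [zeta_apply_ne hp2, mul_one, ih]
    rw [Finset.sum_congr rfl hz]
    show (Sk (k+1) n).card = ∑ x ∈ n.divisorsAntidiagonal, (Sk k x.1).card
    rw [← Finset.card_sigma]
    refine Finset.card_nbij'
      (i := fun d => ⟨(∏ i : Fin k, d i.castSucc, d (Fin.last k)), Fin.init d⟩)
      (j := fun q => Fin.snoc q.2 q.1.2) ?_ ?_ ?_ ?_
    · rintro d hd
      have hd' := (mem_Sk hn).mp hd
      rw [Fin.prod_univ_castSucc] at hd'
      have h1 : (∏ i : Fin k, d i.castSucc) ≠ 0 := fun h => hn (by rw [← hd', h, zero_mul])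
      refine Finset.mem_sigma.mpr ⟨Nat.mem_divisorsAntidiagonal.mpr ⟨hd', hn⟩, ?_⟩
      exact (mem_Sk h1).mpr rfl
    · rintro ⟨⟨a, b⟩, e⟩ hq
      rw [Finset.mem_coe, Finset.mem_sigma] at hq
      obtain ⟨hab, he⟩ := hq
      obtain ⟨h1, h2⟩ := Nat.mem_divisorsAntidiagonal.mp hab
      have ha : a ≠ 0 := fun h => h2 (by rw [← h1, h, zero_mul])
      refine (mem_Sk hn).mpr ?_
      dsimp only
      rw [Fin.prod_univ_castSucc, Fin.snoc_last]
      have : (∏ i : Fin k, (Fin.snoc e b : Fin (k+1) → ℕ) i.castSucc) = a := by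
        rw [← (mem_Sk ha).mp he]
        exact Finset.prod_congr rfl fun i _ => by simp
      rw [this, h1]
    · intro d hd
      exact Fin.snoc_init_self d
    · rintro ⟨⟨a, b⟩, e⟩ hq
      rw [Finset.mem_coe, Finset.mem_sigma] at hq
      obtain ⟨hab, he⟩ := hq
      obtain ⟨h1, h2⟩ := Nat.mem_divisorsAntidiagonal.mp hab
      have ha : a ≠ 0 := fun h => h2 (by rw [← h1, h, zero_mul])
      have hb : (∏ i : Fin k, (Fin.snoc e b : Fin (k+1) → ℕ) i.castSucc : ℕ) = a := by
        rw [← (mem_Sk ha).mp he]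
        exact Finset.prod_congr rfl fun i _ => by simp
      refine Sigma.ext ?_ ?_
      · dsimp only
        rw [Fin.snoc_last, hb]
      · dsimp only
        rw [Fin.init_snoc]

private lemma count_dvd {k : ℕ} {n t : ℕ} (hn : n ≠ 0) (ht : t ≠ 0) :
    ((Sk k n).filter (fun d => ∀ i, t ∣ d i)).card
      = if t ^ k ∣ n then Tc k (n / t ^ k) else 0 := by
  have htk : t ^ k ≠ 0 := pow_ne_zero _ ht
  split_ifs with h
  · have hm : n / t ^ k ≠ 0 := by
      intro h0
      have := Nat.div_mul_cancel h
      rw [h0, zero_mul] at this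
      exact hn this.symm
    refine Finset.card_nbij' (i := fun d i => d i / t) (j := fun e i => t * e i) ?_ ?_ ?_ ?_
    · intro d hd
      obtain ⟨hd1, hd2⟩ := Finset.mem_filter.mp hd
      have hprod := (mem_Sk hn).mp hd1
      refine (mem_Sk hm).mpr ?_
      have : ∏ i, (t * (d i / t)) = n := by
        rw [Finset.prod_congr rfl fun i _ => Nat.mul_div_cancel' (hd2 i)]
        exact hprod
      rw [Finset.prod_mul_distrib, Finset.prod_const, Finset.card_univ, Fintype.card_fin] at this
      dsimp only
      rw [← this, Nat.mul_div_cancel_left _ (Nat.pos_of_ne_zero htk)]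
    · intro e he
      have hprod := (mem_Sk hm).mp he
      refine Finset.mem_filter.mpr ⟨(mem_Sk hn).mpr ?_, fun i => Dvd.intro _ rfl⟩
      rw [Finset.prod_mul_distrib, Finset.prod_const, Finset.card_univ, Fintype.card_fin, hprod,
        Nat.mul_div_cancel' h]
    · intro d hd
      obtain ⟨-, hd2⟩ := Finset.mem_filter.mp hd
      funext i
      exact Nat.mul_div_cancel' (hd2 i)
    · intro e _
      funext i
      exact Nat.mul_div_cancel_left _ (Nat.pos_of_ne_zero ht)
  · rw [Finset.card_eq_zero, Finset.eq_empty_iff_forall_notMem]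
    intro d hd
    obtain ⟨hd1, hd2⟩ := Finset.mem_filter.mp hd
    refine h ?_
    have := Finset.prod_dvd_prod_of_dvd (s := univ) (fun _ : Fin k => t) d (fun i _ => hd2 i)
    rwa [Finset.prod_const, Finset.card_univ, Fintype.card_fin, (mem_Sk hn).mp hd1] at this

private lemma moebius_eq_sum (n : ℕ) :
    moebius n = ∑ t ∈ n.divisors, (moebius * moebius) t := by
  have h : ((moebius * moebius) * (zeta : ArithmeticFunction ℤ)) = moebius := by
    rw [mul_assoc, moebius_mul_coe_zeta, mul_one]
  conv_lhs => rw [← h]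
  exact coe_mul_zeta_apply

/-- `Pg k a = ∑_{t^k = a} (μ∗μ)(t)`. -/
private def Pg (k a : ℕ) : ℤ :=
  ∑ t ∈ a.divisors.filter (fun t => t ^ k = a), (moebius * moebius) t

end Aux

section Aux2

open LSeries
open scoped LSeries.notation

private lemma key {k : ℕ} (hk : 2 ≤ k) {n : ℕ} (hn : n ≠ 0) :
    fmuk k n = ∑ p ∈ n.divisorsAntidiagonal, Pg k p.1 * (Tc k p.2 : ℤ) := by
  have hkpos : k ≠ 0 := by omega
  have i0 : Fin k := ⟨0, by omega⟩
  have hgd : ∀ d ∈ Sk k n, (Finset.univ.gcd d).divisors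
      = n.divisors.filter (fun t => ∀ i, t ∣ d i) := by
    intro d hd
    have hp := (mem_Sk hn).mp hd
    have hg0 : Finset.univ.gcd d ≠ 0 := by
      intro h0
      obtain h := Finset.gcd_eq_zero_iff.mp h0 i0 (mem_univ i0)
      exact hn (hp ▸ Finset.prod_eq_zero (mem_univ i0) h)
    ext t
    simp only [Nat.mem_divisors, Finset.mem_filter]
    constructor
    · rintro ⟨h1, -⟩
      exact ⟨⟨h1.trans ((Finset.gcd_dvd (mem_univ i0)).trans
        (hp ▸ Finset.dvd_prod_of_mem d (mem_univ i0))), hn⟩,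
        fun i => h1.trans (Finset.gcd_dvd (mem_univ i))⟩
    · rintro ⟨⟨-, -⟩, h2⟩
      exact ⟨Finset.dvd_gcd fun i _ => h2 i, hg0⟩
  calc fmuk k n = ∑ d ∈ Sk k n, moebius (Finset.univ.gcd d) := rfl
    _ = ∑ d ∈ Sk k n, ∑ t ∈ n.divisors.filter (fun t => ∀ i, t ∣ d i),
          (moebius * moebius) t := by
        refine Finset.sum_congr rfl fun d hd => ?_
        rw [moebius_eq_sum, hgd d hd]
    _ = ∑ d ∈ Sk k n, ∑ t ∈ n.divisors,
          if (∀ i, t ∣ d i) then (moebius * moebius) t else 0 := by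
        refine Finset.sum_congr rfl fun d _ => (Finset.sum_filter _ _)
    _ = ∑ t ∈ n.divisors, ∑ d ∈ Sk k n,
          if (∀ i, t ∣ d i) then (moebius * moebius) t else 0 := Finset.sum_comm
    _ = ∑ t ∈ n.divisors, (((Sk k n).filter (fun d => ∀ i, t ∣ d i)).card : ℤ)
          * (moebius * moebius) t := by
        refine Finset.sum_congr rfl fun t _ => ?_
        rw [← Finset.sum_filter, Finset.sum_const, nsmul_eq_mul]
    _ = ∑ t ∈ n.divisors,
          (if t ^ k ∣ n then (Tc k (n / t ^ k) : ℤ) else 0) * (moebius * moebius) t := by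
        refine Finset.sum_congr rfl fun t ht => ?_
        rw [count_dvd hn (Nat.pos_of_mem_divisors ht).ne']
        split_ifs <;> simp
    _ = ∑ t ∈ n.divisors.filter (fun t => t ^ k ∣ n),
          (Tc k (n / t ^ k) : ℤ) * (moebius * moebius) t := by
        rw [Finset.sum_filter]
        refine Finset.sum_congr rfl fun t _ => ?_
        rw [ite_mul, zero_mul]
    _ = ∑ q ∈ n.divisorsAntidiagonal.sigma
          (fun p => p.1.divisors.filter (fun t => t ^ k = p.1)),
          (moebius * moebius) q.2 * (Tc k q.1.2 : ℤ) := by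
        refine Finset.sum_nbij' (i := fun t => ⟨(t ^ k, n / t ^ k), t⟩) (j := fun q => q.2)
          ?_ ?_ ?_ ?_ ?_
        · intro t ht
          obtain ⟨ht1, ht2⟩ := Finset.mem_filter.mp ht
          have ht0 : t ≠ 0 := (Nat.pos_of_mem_divisors ht1).ne'
          refine Finset.mem_sigma.mpr ⟨Nat.mem_divisorsAntidiagonal.mpr
            ⟨Nat.mul_div_cancel' ht2, hn⟩, Finset.mem_filter.mpr
            ⟨Nat.mem_divisors.mpr ⟨dvd_pow_self t hkpos, pow_ne_zero _ ht0⟩, rfl⟩⟩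
        · rintro ⟨⟨a, b⟩, t⟩ hq
          obtain ⟨hab, htf⟩ := Finset.mem_sigma.mp hq
          obtain ⟨h1, h2⟩ := Nat.mem_divisorsAntidiagonal.mp hab
          obtain ⟨htd, htk⟩ := Finset.mem_filter.mp htf
          dsimp only at h1 htd htk ⊢
          have htdvd : t ∣ a := (Nat.mem_divisors.mp htd).1
          refine Finset.mem_filter.mpr ⟨Nat.mem_divisors.mpr
            ⟨htdvd.trans ⟨b, h1.symm⟩, hn⟩, ?_⟩
          rw [htk]
          exact ⟨b, h1.symm⟩
        · intro t ht
          rfl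
        · rintro ⟨⟨a, b⟩, t⟩ hq
          obtain ⟨hab, htf⟩ := Finset.mem_sigma.mp hq
          obtain ⟨h1, h2⟩ := Nat.mem_divisorsAntidiagonal.mp hab
          obtain ⟨htd, htk⟩ := Finset.mem_filter.mp htf
          dsimp only at h1 htd htk ⊢
          have ha0 : a ≠ 0 := (Nat.mem_divisors.mp htd).2
          have hb : n / t ^ k = b := by
            rw [htk, ← h1, Nat.mul_div_cancel_left _ (Nat.pos_of_ne_zero ha0)]
          refine Sigma.ext ?_ ?_
          · dsimp only
            rw [hb, htk]
          · dsimp only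
            exact HEq.rfl
        · intro t ht
          dsimp only
          rw [mul_comm]
    _ = ∑ p ∈ n.divisorsAntidiagonal, ∑ t ∈ p.1.divisors.filter (fun t => t ^ k = p.1),
          (moebius * moebius) t * (Tc k p.2 : ℤ) := by
        rw [Finset.sum_sigma]
    _ = ∑ p ∈ n.divisorsAntidiagonal, Pg k p.1 * (Tc k p.2 : ℤ) := by
        refine Finset.sum_congr rfl fun p _ => ?_
        rw [Pg, Finset.sum_mul]

private lemma zeta_pow_LSeries (j : ℕ) {w : ℂ} (hw : 1 < w.re) :
    LSeriesSummable (fun n => ((zeta ^ j) n : ℂ)) w ∧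
      LSeries (fun n => ((zeta ^ j) n : ℂ)) w = riemannZeta w ^ j := by
  induction j with
  | zero =>
    have h1 : (fun n => (((zeta ^ 0 : ArithmeticFunction ℕ) n : ℕ) : ℂ))
        = fun n => ((1 : ArithmeticFunction ℂ) n) := by
      funext n
      rw [pow_zero, one_apply, one_apply]
      split_ifs <;> simp
    rw [h1, ArithmeticFunction.one_eq_delta]
    refine ⟨?_, by rw [LSeries_delta, pow_zero, Pi.one_apply]⟩
    refine summable_of_finite_support ?_
    refine Set.Finite.subset (Set.finite_singleton 1) ?_
    intro n hn
    simp only [Function.mem_support, term_delta] at hn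
    simp only [Set.mem_singleton_iff]
    by_contra h
    exact hn (if_neg h)
  | succ j ih =>
    obtain ⟨ihs, ihv⟩ := ih
    have hcast : (fun n => (((zeta ^ (j+1) : ArithmeticFunction ℕ) n : ℕ) : ℂ))
        = (fun n => ((zeta ^ j) n : ℂ)) ⍟ (fun n => ((zeta n : ℕ) : ℂ)) := by
      funext n
      rw [pow_succ, mul_apply, convolution_def]
      push_cast
      rfl
    have hzs : LSeriesSummable (fun n => ((zeta n : ℕ) : ℂ)) w :=
      LSeriesSummable_zeta_iff.mpr hw
    rw [hcast]
    refine ⟨ihs.convolution hzs, ?_⟩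
    rw [LSeries_convolution' ihs hzs, ihv, LSeries_zeta_eq_riemannZeta hw, pow_succ]

private lemma LSeries_moebius' {w : ℂ} (hw : 1 < w.re) :
    LSeries ↗moebius w = (riemannZeta w)⁻¹ := by
  have h := LSeries_zeta_mul_Lseries_moebius hw
  rw [LSeries_zeta_eq_riemannZeta hw] at h
  field_simp [riemannZeta_ne_zero_of_one_lt_re hw] at h ⊢
  linear_combination h

private lemma G_LSeries {w : ℂ} (hw : 1 < w.re) :
    LSeriesSummable (fun n => (((moebius * moebius : ArithmeticFunction ℤ) n : ℤ) : ℂ)) w ∧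
      LSeries (fun n => (((moebius * moebius : ArithmeticFunction ℤ) n : ℤ) : ℂ)) w
        = (riemannZeta w)⁻¹ * (riemannZeta w)⁻¹ := by
  have hcast : (fun n => (((moebius * moebius : ArithmeticFunction ℤ) n : ℤ) : ℂ))
      = ↗(((moebius : ArithmeticFunction ℤ) : ArithmeticFunction ℂ)
          * ((moebius : ArithmeticFunction ℤ) : ArithmeticFunction ℂ)) := by
    funext n
    rw [← intCoe_mul, intCoe_apply]
  have hμ : ↗(((moebius : ArithmeticFunction ℤ) : ArithmeticFunction ℂ)) = ↗moebius := by
    funext n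
    rw [intCoe_apply]
  have hμs : LSeriesSummable ↗(((moebius : ArithmeticFunction ℤ) : ArithmeticFunction ℂ)) w := by
    rw [hμ]
    exact LSeriesSummable_moebius_iff.mpr hw
  rw [hcast]
  refine ⟨LSeriesSummable_mul hμs hμs, ?_⟩
  rw [LSeries_mul' hμs hμs, hμ, LSeries_moebius' hw]

private lemma Pg_pow {k : ℕ} (hk : k ≠ 0) (t : ℕ) : Pg k (t ^ k) = (moebius * moebius) t := by
  rcases eq_or_ne t 0 with rfl | ht
  · rw [zero_pow hk, Pg]
    simp [ArithmeticFunction.map_zero]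
  · have : (t ^ k).divisors.filter (fun t' => t' ^ k = t ^ k) = {t} := by
      ext t'
      simp only [Finset.mem_filter, Nat.mem_divisors, Finset.mem_singleton]
      constructor
      · rintro ⟨-, h⟩
        exact Nat.pow_left_injective hk h
      · rintro rfl
        exact ⟨⟨dvd_pow_self _ hk, pow_ne_zero _ ht⟩, rfl⟩
    rw [Pg, this, Finset.sum_singleton]

private lemma Pg_not_pow {k a : ℕ} (ha : a ∉ Set.range (fun t : ℕ => t ^ k)) : Pg k a = 0 := by
  rw [Pg, Finset.filter_false_of_mem, Finset.sum_empty]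
  intro t _ h
  exact ha ⟨t, h⟩

private lemma cpow_nat_mul' (t k : ℕ) (s : ℂ) : ((t : ℂ) ^ k) ^ s = (t : ℂ) ^ ((k : ℂ) * s) := by
  rw [← Complex.cpow_natCast (t : ℂ) k, ← Complex.cpow_mul]
  · have him : (Complex.log t * (k : ℂ)).im = 0 := by
      simp [Complex.mul_im, Complex.natCast_im, Complex.log_im, Complex.natCast_arg]
    rw [him]
    exact neg_neg_iff_pos.mpr Real.pi_pos
  · have him : (Complex.log t * (k : ℂ)).im = 0 := by
      simp [Complex.mul_im, Complex.natCast_im, Complex.log_im, Complex.natCast_arg]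
    rw [him]
    exact Real.pi_pos.le

private lemma P_term_eq {k : ℕ} (hk : k ≠ 0) (s : ℂ) (t : ℕ) :
    term (fun a => ((Pg k a : ℤ) : ℂ)) s (t ^ k)
      = term (fun n => (((moebius * moebius : ArithmeticFunction ℤ) n : ℤ) : ℂ))
          ((k : ℂ) * s) t := by
  rcases eq_or_ne t 0 with rfl | ht
  · rw [zero_pow hk, term_zero, term_zero]
  · rw [term_of_ne_zero (pow_ne_zero _ ht), term_of_ne_zero ht, Pg_pow hk, Nat.cast_pow,
      cpow_nat_mul']

end Aux2

open LSeries
open scoped LSeries.notation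

/-- for `Re s > 1`, `∑ f_{μ,k}(n)/n^s` converges absolutely and equals
`ζ(s)^k / ζ(ks)²`. -/
theorem stmt3 (k : ℕ) (hk : 2 ≤ k) (s : ℂ) (hs : 1 < s.re) :
    Summable (fun n : ℕ => ‖(fmuk k n : ℂ) / (n : ℂ) ^ s‖) ∧
    ∑' n : ℕ, (fmuk k n : ℂ) / (n : ℂ) ^ s
      = riemannZeta s ^ k / riemannZeta ((k : ℂ) * s) ^ 2 := by
  have hk0 : k ≠ 0 := by omega
  set w : ℂ := (k : ℂ) * s with hw_def
  have hw : 1 < w.re := by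
    have hre : w.re = k * s.re := by
      simp [hw_def, Complex.mul_re]
    rw [hre]
    have h2 : (2 : ℝ) ≤ (k : ℝ) := by exact_mod_cast hk
    nlinarith
  set F : ℕ → ℂ := fun n => ((fmuk k n : ℤ) : ℂ) with hF_def
  set P' : ℕ → ℂ := fun a => ((Pg k a : ℤ) : ℂ) with hP_def
  set T' : ℕ → ℂ := fun n => ((zeta ^ k) n : ℂ) with hT_def
  set G : ℕ → ℂ := fun n => (((moebius * moebius : ArithmeticFunction ℤ) n : ℤ) : ℂ) with hG_def
  -- convolution identity
  have hconv : ∀ {n : ℕ}, n ≠ 0 → F n = (P' ⍟ T') n := by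
    intro n hn
    rw [convolution_def]
    have := key hk hn
    rw [hF_def]
    dsimp only
    rw [this]
    push_cast
    refine Finset.sum_congr rfl fun p _ => ?_
    rw [hP_def, hT_def]
    dsimp only
    rw [Tc_eq_zeta_pow]
  -- summability of the pieces
  obtain ⟨hTs, hTv⟩ := zeta_pow_LSeries k hs
  obtain ⟨hGs, hGv⟩ := G_LSeries hw
  have he : Function.Injective (fun t : ℕ => t ^ k) := Nat.pow_left_injective hk0
  have hvanish : ∀ n ∉ Set.range (fun t : ℕ => t ^ k), term P' s n = 0 := by
    intro n hn
    have hn0 : n ≠ 0 := by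
      rintro rfl
      exact hn ⟨0, zero_pow hk0⟩
    rw [term_of_ne_zero hn0, hP_def]
    dsimp only
    rw [Pg_not_pow hn]
    simp
  have hcomp : (term P' s) ∘ (fun t : ℕ => t ^ k) = term G w := by
    funext t
    exact P_term_eq hk0 s t
  have hPs : LSeriesSummable P' s := by
    rw [LSeriesSummable, ← he.summable_iff hvanish, hcomp]
    exact hGs
  have hPv : LSeries P' s = (riemannZeta w)⁻¹ * (riemannZeta w)⁻¹ := by
    rw [LSeries, ← he.tsum_eq (f := term P' s) ?_]
    · rw [show (fun t : ℕ => term P' s (t ^ k)) = term G w from hcomp, ← LSeries, hGv]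
    · intro n hn
      by_contra hmem
      exact hn (hvanish n hmem)
  have hFs : LSeriesSummable F s := by
    rw [LSeriesSummable_congr s hconv]
    exact hPs.convolution hTs
  have hF0 : F 0 = 0 := by
    have h0 : fmuk k 0 = 0 := by
      show ∑ d ∈ Sk k 0, moebius (Finset.univ.gcd d) = 0
      rw [Sk_zero, Finset.sum_empty]
    show ((fmuk k 0 : ℤ) : ℂ) = 0
    rw [h0]
    simp
  have hterm : ∀ n : ℕ, (fmuk k n : ℂ) / (n : ℂ) ^ s = term F s n := by
    intro n
    rcases eq_or_ne n 0 with rfl | hn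
    · rw [term_zero]
      have : ((fmuk k 0 : ℤ) : ℂ) = 0 := hF0
      rw [this, zero_div]
    · rw [term_of_ne_zero hn]
  constructor
  · have := summable_norm_iff.mpr hFs
    refine this.congr fun n => ?_
    rw [hterm n]
  · have hζw : riemannZeta w ≠ 0 := riemannZeta_ne_zero_of_one_lt_re hw
    calc ∑' n : ℕ, (fmuk k n : ℂ) / (n : ℂ) ^ s = ∑' n, term F s n := tsum_congr hterm
      _ = LSeries F s := rfl
      _ = LSeries (P' ⍟ T') s := LSeries_congr hconv s
      _ = LSeries P' s * LSeries T' s := LSeries_convolution' hPs hTs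
      _ = (riemannZeta w)⁻¹ * (riemannZeta w)⁻¹ * riemannZeta s ^ k := by rw [hPv, hTv]
      _ = riemannZeta s ^ k / riemannZeta w ^ 2 := by
          rw [pow_two]
          field_simp
end

section
/- For every positive integer n and integer k ≥ 2, ∑_{d₁⋯d_k = n} |μ(gcd(d₁,…,d_k))| = ∑_{a^{2k} · b = n} μ(a) · τ_k(b). -/
open Finset ArithmeticFunction
open scoped ArithmeticFunction.Moebius

lemma not_dvd_div {p a : ℕ} (hp : p.Prime) (hsf : Squarefree a) (hpa : p ∣ a) : ¬ p ∣ a / p := by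
  intro hd
  refine hp.not_isUnit (hsf p ?_)
  have := Nat.mul_dvd_mul hd (dvd_refl p)
  rwa [Nat.div_mul_cancel hpa, mul_comm] at this

lemma sumA {m : ℕ} (hm : m ≠ 0) (hns : ¬ Squarefree m) :
    ∑ a ∈ m.divisors, (if a ^ 2 ∣ m then μ a else 0) = 0 := by
  obtain ⟨p, hp, hpm⟩ : ∃ p, p.Prime ∧ p * p ∣ m := by
    simpa [Nat.squarefree_iff_prime_squarefree] using hns
  have h2 : p ^ 2 ∣ m := by rwa [sq]
  have step : ∑ a ∈ m.divisors, (if a ^ 2 ∣ m then μ a else 0)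
      = ∑ a ∈ m.divisors.filter (fun a => a ^ 2 ∣ m ∧ Squarefree a), μ a := by
    rw [Finset.sum_filter]
    refine Finset.sum_congr rfl fun a _ => ?_
    by_cases h1 : a ^ 2 ∣ m
    · by_cases hsf : Squarefree a
      · simp [h1, hsf]
      · simp [h1, hsf, moebius_eq_zero_of_not_squarefree hsf]
    · simp [h1]
  rw [step]
  refine Finset.sum_involution (fun a _ => if p ∣ a then a / p else a * p) ?_ ?_ ?_ ?_
  · intro a ha
    simp only [Finset.mem_filter, Nat.mem_divisors] at ha
    obtain ⟨⟨ham, hm0⟩, hsq, hsf⟩ := ha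
    by_cases hpa : p ∣ a
    · have hcop : Nat.Coprime p (a / p) :=
        (Nat.Prime.coprime_iff_not_dvd hp).mpr (not_dvd_div hp hsf hpa)
      have key : μ a = -μ (a / p) := by
        nth_rewrite 1 [← Nat.mul_div_cancel' hpa]
        rw [ArithmeticFunction.isMultiplicative_moebius.map_mul_of_coprime hcop,
          moebius_apply_prime hp]
        ring
      simp only [if_pos hpa, key]; ring
    · have hcop : Nat.Coprime a p := ((Nat.Prime.coprime_iff_not_dvd hp).mpr hpa).symm
      simp only [if_neg hpa]
      rw [ArithmeticFunction.isMultiplicative_moebius.map_mul_of_coprime hcop,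
        moebius_apply_prime hp]
      ring
  · intro a ha _
    simp only [Finset.mem_filter, Nat.mem_divisors] at ha
    obtain ⟨⟨ham, hm0⟩, hsq, hsf⟩ := ha
    have ha0 : 0 < a := Nat.pos_of_ne_zero hsf.ne_zero
    by_cases hpa : p ∣ a
    · simp only [if_pos hpa]
      intro h
      have h2' := Nat.div_mul_cancel hpa
      rw [h] at h2'
      nlinarith [hp.two_le]
    · simp only [if_neg hpa]
      intro h
      nlinarith [hp.two_le]
  · intro a ha
    simp only [Finset.mem_filter, Nat.mem_divisors] at ha ⊢
    obtain ⟨⟨ham, hm0⟩, hsq, hsf⟩ := ha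
    by_cases hpa : p ∣ a
    · simp only [if_pos hpa]
      exact ⟨⟨dvd_trans (Nat.div_dvd_of_dvd hpa) ham, hm0⟩,
        dvd_trans (pow_dvd_pow_of_dvd (Nat.div_dvd_of_dvd hpa) 2) hsq,
        hsf.squarefree_of_dvd (Nat.div_dvd_of_dvd hpa)⟩
    · simp only [if_neg hpa]
      have hcop : Nat.Coprime a p := ((Nat.Prime.coprime_iff_not_dvd hp).mpr hpa).symm
      have hdvd : (a * p) ^ 2 ∣ m := by
        rw [mul_pow]
        exact (Nat.Coprime.pow 2 2 hcop).mul_dvd_of_dvd_of_dvd hsq h2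
      refine ⟨⟨dvd_trans (dvd_pow_self _ two_ne_zero) hdvd, hm0⟩, hdvd, ?_⟩
      rw [Nat.squarefree_mul_iff]
      exact ⟨hcop, hsf, hp.squarefree⟩
  · intro a ha
    simp only [Finset.mem_filter, Nat.mem_divisors] at ha
    obtain ⟨⟨ham, hm0⟩, hsq, hsf⟩ := ha
    by_cases hpa : p ∣ a
    · have hnd := not_dvd_div hp hsf hpa
      simp only [if_pos hpa, if_neg hnd]
      exact Nat.div_mul_cancel hpa
    · have hd : p ∣ a * p := dvd_mul_left p a
      simp only [if_neg hpa, if_pos hd]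
      rw [Nat.mul_div_assoc a (dvd_refl p), Nat.div_self hp.pos, mul_one]

lemma sumB {m : ℕ} (hm : m ≠ 0) :
    ∑ a ∈ m.divisors, (if a ^ 2 ∣ m then μ a else 0) = |μ m| := by
  by_cases hsf : Squarefree m
  · rw [abs_moebius_eq_one_of_squarefree hsf, ← Finset.sum_filter]
    have h1 : m.divisors.filter (fun a => a ^ 2 ∣ m) = {1} := by
      ext a
      simp only [Finset.mem_filter, Nat.mem_divisors, Finset.mem_singleton]
      constructor
      · rintro ⟨⟨_, _⟩, h2⟩
        exact Nat.isUnit_iff.mp (hsf a (by rwa [← sq]))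
      · rintro rfl
        exact ⟨⟨one_dvd m, hm⟩, one_dvd m⟩
    rw [h1, Finset.sum_singleton, moebius_apply_one]
  · rw [sumA hm hsf, moebius_eq_zero_of_not_squarefree hsf, abs_zero]

lemma sumC {n m : ℕ} (hn : n ≠ 0) (hmn : m ∣ n) :
    ∑ a ∈ n.divisors, (if a ^ 2 ∣ m then μ a else 0) = |μ m| := by
  have hm : m ≠ 0 := fun h => hn (by simpa [h] using hmn)
  rw [← sumB hm]
  exact (Finset.sum_subset (Nat.divisors_subset_of_dvd hn hmn) (fun x hx hnx => by
    rw [if_neg]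
    intro h
    exact hnx (Nat.mem_divisors.mpr ⟨dvd_trans (dvd_pow_self x two_ne_zero) h, hm⟩))).symm

lemma countC {n k a : ℕ} (hn : n ≠ 0) (ha : a ≠ 0) (hk : k ≠ 0) :
    ((((Fintype.piFinset fun _ : Fin k => n.divisors).filter (fun f => ∏ i, f i = n)).filter
      (fun d => ∀ i, a ^ 2 ∣ d i)).card : ℕ)
    = if a ^ (2 * k) ∣ n then tauk k (n / a ^ (2 * k)) else 0 := by
  have hpow : a ^ (2 * k) = (a ^ 2) ^ k := by rw [← pow_mul]
  have ha2 : 0 < a ^ 2 := pow_pos (Nat.pos_of_ne_zero ha) 2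
  by_cases hd : a ^ (2 * k) ∣ n
  · rw [if_pos hd]
    set m := n / a ^ (2 * k) with hmdef
    have hm : a ^ (2 * k) * m = n := Nat.mul_div_cancel' hd
    have hm0 : m ≠ 0 := by
      intro h
      rw [h, mul_zero] at hm
      exact hn hm.symm
    unfold tauk
    apply Finset.card_nbij' (fun d j => d j / a ^ 2) (fun e j => a ^ 2 * e j)
    · intro d hd'
      simp only [Finset.mem_coe, Finset.mem_filter, Fintype.mem_piFinset, Nat.mem_divisors] at hd' ⊢
      obtain ⟨⟨hdiv, hprod⟩, hsq⟩ := hd'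
      have hde : ∀ j, d j = a ^ 2 * (d j / a ^ 2) := fun j => (Nat.mul_div_cancel' (hsq j)).symm
      have hprod' : (a ^ 2) ^ k * ∏ j, d j / a ^ 2 = n :=
        calc (a ^ 2) ^ k * ∏ j, d j / a ^ 2 = ∏ j, a ^ 2 * (d j / a ^ 2) := by
              rw [Finset.prod_mul_distrib, Finset.prod_const, Finset.card_univ, Fintype.card_fin]
          _ = ∏ j, d j := Finset.prod_congr rfl fun j _ => (hde j).symm
          _ = n := hprod
      have hpe : ∏ j, d j / a ^ 2 = m := by
        have := hprod'.trans hm.symm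
        rw [hpow] at this
        exact Nat.eq_of_mul_eq_mul_left (pow_pos ha2 k) this
      exact ⟨fun j => ⟨hpe ▸ Finset.dvd_prod_of_mem _ (Finset.mem_univ j), hm0⟩, hpe⟩
    · intro e he
      simp only [Finset.mem_coe, Finset.mem_filter, Fintype.mem_piFinset, Nat.mem_divisors] at he ⊢
      obtain ⟨hdiv, hprod⟩ := he
      have hprod' : ∏ j, a ^ 2 * e j = n := by
        rw [Finset.prod_mul_distrib, Finset.prod_const, Finset.card_univ, Fintype.card_fin,
          hprod, ← hpow, hm]
      refine ⟨⟨fun j => ⟨?_, hn⟩, hprod'⟩, fun j => dvd_mul_right _ _⟩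
      calc a ^ 2 * e j ∣ a ^ (2 * k) * m :=
            mul_dvd_mul (hpow ▸ dvd_pow_self (a ^ 2) hk) (hdiv j).1
        _ = n := hm
    · intro d hd'
      simp only [Finset.mem_coe, Finset.mem_filter] at hd'
      funext j
      exact Nat.mul_div_cancel' (hd'.2 j)
    · intro e _
      funext j
      exact Nat.mul_div_cancel_left _ ha2
  · rw [if_neg hd, Finset.card_eq_zero, Finset.eq_empty_iff_forall_notMem]
    intro d hd'
    simp only [Finset.mem_filter, Fintype.mem_piFinset, Nat.mem_divisors] at hd'
    obtain ⟨⟨hdiv, hprod⟩, hsq⟩ := hd'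
    apply hd
    rw [hpow, ← hprod]
    calc (a^2)^k = ∏ _j : Fin k, a ^ 2 := by
          rw [Finset.prod_const, Finset.card_univ, Fintype.card_fin]
      _ ∣ ∏ j, d j := Finset.prod_dvd_prod_of_dvd _ _ (fun j _ => hsq j)

/-- `∑_{d₁⋯d_k = n} |μ(gcd(d₁,…,d_k))| = ∑_{a^{2k} b = n} μ(a) τ_k(b)`. -/
theorem stmt4 (n k : ℕ) (hn : 0 < n) (hk : 2 ≤ k) :
    ∑ d ∈ (Fintype.piFinset fun _ : Fin k => n.divisors).filter (fun f => ∏ i, f i = n),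
        |moebius (Finset.univ.gcd d)|
    = ∑ p ∈ (n.divisors ×ˢ n.divisors).filter (fun p => p.1 ^ (2 * k) * p.2 = n),
        moebius p.1 * (tauk k p.2 : ℤ) := by
  classical
  have hn0 : n ≠ 0 := hn.ne'
  have hk0 : k ≠ 0 := by omega
  set S := (Fintype.piFinset fun _ : Fin k => n.divisors).filter (fun f => ∏ i, f i = n) with hS
  conv_rhs => rw [Finset.sum_filter, Finset.sum_product]
  have step1 : ∑ d ∈ S, |μ (Finset.univ.gcd d)|
      = ∑ d ∈ S, ∑ a ∈ n.divisors, (if a ^ 2 ∣ Finset.univ.gcd d then μ a else 0) := by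
    refine Finset.sum_congr rfl fun d hd => ?_
    have hdm : d ∈ Fintype.piFinset fun _ : Fin k => n.divisors :=
      (Finset.mem_filter.mp hd).1
    have hi : (⟨0, by omega⟩ : Fin k) ∈ (Finset.univ : Finset (Fin k)) := Finset.mem_univ _
    have hgcd : Finset.univ.gcd d ∣ n :=
      dvd_trans (Finset.gcd_dvd hi)
        (Nat.dvd_of_mem_divisors (Fintype.mem_piFinset.mp hdm _))
    exact (sumC hn0 hgcd).symm
  rw [step1, Finset.sum_comm]
  refine Finset.sum_congr rfl fun a ha => ?_
  have ha0 : a ≠ 0 := Nat.pos_of_mem_divisors ha |>.ne'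
  have hL : ∑ d ∈ S, (if a ^ 2 ∣ Finset.univ.gcd d then μ a else 0)
      = ((S.filter (fun d => ∀ i, a ^ 2 ∣ d i)).card : ℤ) * μ a := by
    have : ∀ d : Fin k → ℕ, (a ^ 2 ∣ Finset.univ.gcd d) ↔ (∀ i, a ^ 2 ∣ d i) := by
      intro d
      rw [Finset.dvd_gcd_iff]
      simp
    calc ∑ d ∈ S, (if a ^ 2 ∣ Finset.univ.gcd d then μ a else 0)
        = ∑ d ∈ S, (if (∀ i, a ^ 2 ∣ d i) then μ a else 0) :=
          Finset.sum_congr rfl fun d _ => by simp only [this d]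
      _ = ∑ d ∈ S.filter (fun d => ∀ i, a ^ 2 ∣ d i), μ a := (Finset.sum_filter _ _).symm
      _ = ((S.filter (fun d => ∀ i, a ^ 2 ∣ d i)).card : ℤ) * μ a := by
          rw [Finset.sum_const, nsmul_eq_mul]
  rw [hL, countC hn0 ha0 hk0]
  by_cases hdvd : a ^ (2 * k) ∣ n
  · rw [if_pos hdvd]
    rw [Finset.sum_eq_single_of_mem (n / a ^ (2 * k))
      (Nat.mem_divisors.mpr ⟨Nat.div_dvd_of_dvd hdvd, hn0⟩)]
    · rw [if_pos (Nat.mul_div_cancel' hdvd)]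
      push_cast
      ring
    · intro b hb hne
      rw [if_neg]
      intro h
      exact hne (by rw [← h, Nat.mul_div_cancel_left _ (Nat.pos_of_ne_zero (by positivity))])
  · rw [if_neg hdvd]
    rw [Finset.sum_eq_zero, Nat.cast_zero, zero_mul]
    intro b hb
    rw [if_neg]
    intro h
    exact hdvd ⟨b, h.symm⟩
end

section
/- For every complex s with Re(s) > 1 and integer k ≥ 2, ∑_{n=1}^∞ f_{|μ|,k}(n)/n^s = ζ(s)^k / ζ(2ks), where f_{|μ|,k}(n) = ∑_{d₁⋯d_k = n} |μ(gcd(d₁,…,d_k))|, with absolute convergence of the series. -/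
open Finset ArithmeticFunction
open scoped ArithmeticFunction.Moebius ArithmeticFunction.zeta

/-- `f_{|μ|,k}(n) = ∑_{d₁⋯d_k = n} |μ(gcd(d₁,…,d_k))|`. -/
def fabsmuk (k n : ℕ) : ℤ :=
  ∑ d ∈ (Fintype.piFinset fun _ : Fin k => n.divisors).filter (fun f => ∏ i, f i = n),
    |moebius (Finset.univ.gcd d)|

namespace Stmt5

/-- squarefree indicator as moebius sum over square divisors -/
lemma abs_moebius_eq_sum {g : ℕ} (hg : g ≠ 0) :
    |μ g| = ∑ e ∈ g.divisors.filter (fun e => e ^ 2 ∣ g), μ e := by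
  obtain ⟨a, b, hab, ha⟩ := Nat.sq_mul_squarefree g
  have hb : b ≠ 0 := by rintro rfl; simp at hab; omega
  have ha0 : a ≠ 0 := by rintro rfl; simp at hab; omega
  have hset : g.divisors.filter (fun e => e ^ 2 ∣ g) = b.divisors := by
    ext e
    simp only [Finset.mem_filter, Nat.mem_divisors, hg, hb, and_true, ne_eq,
      not_false_eq_true]
    constructor
    · rintro ⟨heg, he2⟩
      have he0 : e ≠ 0 := by rintro rfl; exact hg (Nat.eq_zero_of_zero_dvd heg)
      rw [← Nat.factorization_le_iff_dvd he0 hb, Finsupp.le_def]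
      intro p
      have h2 : (e ^ 2).factorization ≤ g.factorization :=
        (Nat.factorization_le_iff_dvd (pow_ne_zero _ he0) hg).mpr he2
      have h2p := Finsupp.le_def.mp h2 p
      rw [Nat.factorization_pow, ← hab, Nat.factorization_mul (pow_ne_zero _ hb) ha0,
        Nat.factorization_pow] at h2p
      have hap : a.factorization p ≤ 1 := ha.natFactorization_le_one p
      simp only [Finsupp.coe_smul, Finsupp.coe_add, Pi.smul_apply, Pi.add_apply,
        smul_eq_mul] at h2p ⊢
      omega
    · intro heb
      constructor
      · exact heb.trans ((dvd_pow_self b two_ne_zero).trans (Dvd.intro a hab))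
      · exact (pow_dvd_pow_of_dvd heb 2).trans (Dvd.intro a hab)
  have hsum : ∑ e ∈ b.divisors, μ e = if b = 1 then 1 else 0 := by
    have h1 := congrArg (fun f : ArithmeticFunction ℤ => f b) moebius_mul_coe_zeta
    simp only [mul_apply, one_apply] at h1
    rw [Nat.sum_divisorsAntidiagonal (fun x y => μ x * ((ζ : ArithmeticFunction ℤ) y))] at h1
    rw [← h1]
    refine Finset.sum_congr rfl fun d hd => ?_
    rw [Nat.mem_divisors] at hd
    have hd' : b / d ≠ 0 := by
      have := Nat.div_pos (Nat.le_of_dvd (Nat.pos_of_ne_zero hb) hd.1)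
        (Nat.pos_of_mem_divisors (Nat.mem_divisors.mpr hd))
      omega
    simp [zeta_apply_ne hd']
  rw [hset, hsum, abs_moebius]
  have hiff : Squarefree g ↔ b = 1 := by
    constructor
    · intro hsq
      have : b * b ∣ g := by rw [← sq]; exact Dvd.intro a hab
      exact Nat.isUnit_iff.mp (hsq b this)
    · rintro rfl
      rw [one_pow, one_mul] at hab
      rwa [← hab]
  simp [hiff]

/-- number of ordered k-tuples of divisors with product m -/
def tcount (k m : ℕ) : ℕ :=
  ((Fintype.piFinset fun _ : Fin k => m.divisors).filter (fun f => ∏ i, f i = m)).card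

lemma tcount_zero {k : ℕ} (hk : k ≠ 0) : tcount k 0 = 0 := by
  rw [tcount, Finset.card_eq_zero, Finset.eq_empty_iff_forall_notMem]
  intro f hf
  rw [Finset.mem_filter, Fintype.mem_piFinset] at hf
  have := hf.1 ⟨0, Nat.pos_of_ne_zero hk⟩
  simp at this

lemma zeta_pow_apply {k m : ℕ} (hm : m ≠ 0) :
    ((ζ : ArithmeticFunction ℂ) ^ k) m = (tcount k m : ℂ) := by
  induction k generalizing m with
  | zero =>
    rw [pow_zero, one_apply, tcount]
    by_cases h1 : m = 1
    · subst h1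
      rw [if_pos rfl]
      have : ((Fintype.piFinset fun _ : Fin 0 => Nat.divisors 1).filter
          (fun f => ∏ i, f i = 1)) = Fintype.piFinset fun _ : Fin 0 => Nat.divisors 1 := by
        refine Finset.filter_true_of_mem fun f _ => ?_
        simp
      rw [this]
      simp [Fintype.card_piFinset]
    · rw [if_neg h1]
      symm
      rw [Nat.cast_eq_zero, Finset.card_eq_zero, Finset.eq_empty_iff_forall_notMem]
      intro f hf
      rw [Finset.mem_filter] at hf
      exact h1 (by simpa using hf.2.symm)
  | succ k ih =>
    rw [pow_succ', mul_apply]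
    rw [Nat.sum_divisorsAntidiagonal
      (fun x y => (ζ : ArithmeticFunction ℂ) x * ((ζ : ArithmeticFunction ℂ) ^ k) y)]
    have hcard : tcount (k+1) m = ∑ a ∈ m.divisors, tcount k (m / a) := by
      rw [tcount]
      rw [Finset.card_eq_sum_card_fiberwise (f := fun d => d 0) (t := m.divisors)
        (fun d hd => by
          rw [Finset.mem_coe, Finset.mem_filter, Fintype.mem_piFinset] at hd
          exact hd.1 0)]
      refine Finset.sum_congr rfl fun a haa => ?_
      rw [Nat.mem_divisors] at haa
      obtain ⟨ham, hm0⟩ := haa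
      have ha0 : a ≠ 0 := by rintro rfl; exact hm (Nat.eq_zero_of_zero_dvd ham)
      have hma0 : m / a ≠ 0 := by
        have := Nat.div_pos (Nat.le_of_dvd (Nat.pos_of_ne_zero hm) ham) (Nat.pos_of_ne_zero ha0)
        omega
      rw [tcount]
      refine Finset.card_nbij' (fun d => Fin.tail d) (fun c => Fin.cons a c) ?_ ?_ ?_ ?_
      · intro d hd
        simp only [Finset.mem_coe, Finset.mem_filter, Fintype.mem_piFinset] at hd
        obtain ⟨⟨hd1, hd2⟩, hd3⟩ := hd
        rw [Fin.prod_univ_succ, hd3] at hd2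
        have hprod : ∏ i : Fin k, d i.succ = m / a := by
          rw [← hd2, Nat.mul_div_cancel_left _ (Nat.pos_of_ne_zero ha0)]
        simp only [Finset.mem_coe, Finset.mem_filter, Fintype.mem_piFinset, Fin.tail]
        refine ⟨fun j => ?_, hprod⟩
        rw [Nat.mem_divisors]
        exact ⟨hprod ▸ Finset.dvd_prod_of_mem (fun i => d i.succ) (Finset.mem_univ j), hma0⟩
      · intro c hc
        simp only [Finset.mem_coe, Finset.mem_filter, Fintype.mem_piFinset] at hc
        obtain ⟨hc1, hc2⟩ := hc
        simp only [Finset.mem_coe, Finset.mem_filter, Fintype.mem_piFinset]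
        refine ⟨⟨fun j => ?_, ?_⟩, by simp⟩
        · refine Fin.cases ?_ ?_ j
          · simpa using Nat.mem_divisors.mpr ⟨ham, hm0⟩
          · intro i
            simp only [Fin.cons_succ]
            have hci := hc1 i
            rw [Nat.mem_divisors] at hci ⊢
            exact ⟨hci.1.trans (Nat.div_dvd_of_dvd ham), hm0⟩
        · rw [Fin.prod_univ_succ]
          simp only [Fin.cons_zero, Fin.cons_succ]
          rw [hc2, Nat.mul_div_cancel' ham]
      · intro d hd
        simp only [Finset.mem_coe, Finset.mem_filter] at hd
        rw [← hd.2]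
        exact Fin.cons_self_tail d
      · intro c hc
        funext i
        simp [Fin.tail_cons]
    rw [hcard]
    push_cast
    refine Finset.sum_congr rfl fun a haa => ?_
    have ha0 : a ≠ 0 := (Nat.pos_of_mem_divisors haa).ne'
    have hma0 : m / a ≠ 0 := by
      rw [Nat.mem_divisors] at haa
      have := Nat.div_pos (Nat.le_of_dvd (Nat.pos_of_ne_zero hm) haa.1) (Nat.pos_of_ne_zero ha0)
      omega
    rw [ih hma0, natCoe_apply, zeta_apply_ne ha0]
    push_cast
    ring

lemma filtered_count {k n e : ℕ} (hn : n ≠ 0) (he : e ≠ 0) :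
    (((Fintype.piFinset fun _ : Fin k => n.divisors).filter
        (fun d => (∏ i, d i = n) ∧ ∀ i, e ^ 2 ∣ d i)).card : ℂ)
      = if e ^ (2 * k) ∣ n then (tcount k (n / e ^ (2 * k)) : ℂ) else 0 := by
  have hpow : ∀ d : Fin k → ℕ, (∀ i, e ^ 2 ∣ d i) → e ^ (2 * k) ∣ ∏ i, d i := by
    intro d hd
    have h1 : (∏ _i : Fin k, e ^ 2) ∣ ∏ i, d i :=
      Finset.prod_dvd_prod_of_dvd _ _ (fun i _ => hd i)
    rwa [Finset.prod_const, Finset.card_univ, Fintype.card_fin, ← pow_mul] at h1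
  by_cases hdvd : e ^ (2 * k) ∣ n
  · rw [if_pos hdvd]
    norm_cast
    have hE : e ^ (2 * k) ≠ 0 := pow_ne_zero _ he
    have hm0 : n / e ^ (2 * k) ≠ 0 := by
      have := Nat.div_pos (Nat.le_of_dvd (Nat.pos_of_ne_zero hn) hdvd) (Nat.pos_of_ne_zero hE)
      omega
    rw [tcount]
    refine Finset.card_nbij' (fun d j => d j / e ^ 2) (fun c j => e ^ 2 * c j) ?_ ?_ ?_ ?_
    · intro d hd
      simp only [Finset.mem_coe, Finset.mem_filter, Fintype.mem_piFinset] at hd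
      obtain ⟨hd1, hd2, hd3⟩ := hd
      have hexp : ∀ j, d j = e ^ 2 * (d j / e ^ 2) := fun j => (Nat.mul_div_cancel' (hd3 j)).symm
      have hprod : ∏ j, d j / e ^ 2 = n / e ^ (2 * k) := by
        have : n = e ^ (2 * k) * ∏ j, d j / e ^ 2 := by
          conv_lhs => rw [← hd2]
          rw [Finset.prod_congr rfl (fun j _ => hexp j), Finset.prod_mul_distrib,
            Finset.prod_const, Finset.card_univ, Fintype.card_fin, ← pow_mul]
        rw [this, Nat.mul_div_cancel_left _ (Nat.pos_of_ne_zero hE)]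
      simp only [Finset.mem_coe, Finset.mem_filter, Fintype.mem_piFinset]
      refine ⟨fun j => Nat.mem_divisors.mpr ⟨?_, hm0⟩, hprod⟩
      exact hprod ▸ Finset.dvd_prod_of_mem _ (Finset.mem_univ j)
    · intro c hc
      simp only [Finset.mem_coe, Finset.mem_filter, Fintype.mem_piFinset] at hc
      obtain ⟨hc1, hc2⟩ := hc
      have hprod : ∏ j, e ^ 2 * c j = n := by
        rw [Finset.prod_mul_distrib, Finset.prod_const, Finset.card_univ, Fintype.card_fin,
          ← pow_mul, hc2, Nat.mul_div_cancel' hdvd]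
      simp only [Finset.mem_coe, Finset.mem_filter, Fintype.mem_piFinset]
      exact ⟨fun j => Nat.mem_divisors.mpr
        ⟨hprod ▸ Finset.dvd_prod_of_mem _ (Finset.mem_univ j), hn⟩,
        hprod, fun j => Dvd.intro _ rfl⟩
    · intro d hd
      simp only [Finset.mem_coe, Finset.mem_filter, Fintype.mem_piFinset] at hd
      funext j
      exact Nat.mul_div_cancel' (hd.2.2 j)
    · intro c hc
      funext j
      exact Nat.mul_div_cancel_left _ (Nat.pos_of_ne_zero (pow_ne_zero 2 he))
  · rw [if_neg hdvd]
    norm_cast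
    rw [Finset.card_eq_zero, Finset.eq_empty_iff_forall_notMem]
    intro d hd
    rw [Finset.mem_filter] at hd
    exact hdvd (hd.2.1 ▸ hpow d hd.2.2)

/-- the coefficient sequence supported on 2k-th powers -/
noncomputable def Hseq (k n : ℕ) : ℂ :=
  ∑ e ∈ n.divisors.filter (fun e => e ^ (2 * k) = n), (μ e : ℂ)

noncomputable def Tseq (k n : ℕ) : ℂ := (tcount k n : ℂ)

lemma main_identity {k : ℕ} (hk : 2 ≤ k) {n : ℕ} (hn : n ≠ 0) :
    (fabsmuk k n : ℂ) = ∑ p ∈ n.divisorsAntidiagonal, Hseq k p.1 * Tseq k p.2 := by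
  have hki : (0 : ℕ) < k := by omega
  set A := (Fintype.piFinset fun _ : Fin k => n.divisors).filter (fun f => ∏ i, f i = n)
    with hA
  -- Step A: expand |μ(gcd)| as a sum over square divisors
  have stepA : (fabsmuk k n : ℂ) =
      ∑ d ∈ A, ∑ e ∈ n.divisors, (if e ^ 2 ∣ Finset.univ.gcd d then (μ e : ℂ) else 0) := by
    rw [fabsmuk]
    push_cast
    refine Finset.sum_congr rfl fun d hd => ?_
    rw [hA, Finset.mem_filter, Fintype.mem_piFinset] at hd
    obtain ⟨hd1, hd2⟩ := hd
    set g := Finset.univ.gcd d with hgdef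
    have hgd : g ∣ d ⟨0, hki⟩ := Finset.gcd_dvd (Finset.mem_univ _)
    have hdn : d ⟨0, hki⟩ ∣ n := (Nat.mem_divisors.mp (hd1 _)).1
    have hd0 : d ⟨0, hki⟩ ≠ 0 := (Nat.pos_of_mem_divisors (hd1 _)).ne'
    have hg0 : g ≠ 0 := by
      intro h
      rw [h] at hgd
      exact hd0 (Nat.eq_zero_of_zero_dvd hgd)
    have hgn : g ∣ n := hgd.trans hdn
    have hsetg : g.divisors.filter (fun e => e ^ 2 ∣ g)
        = n.divisors.filter (fun e => e ^ 2 ∣ g) := by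
      ext e
      simp only [Finset.mem_filter, Nat.mem_divisors, hg0, hn, and_true, ne_eq,
        not_false_eq_true]
      constructor
      · rintro ⟨h1, h2⟩; exact ⟨h1.trans hgn, h2⟩
      · rintro ⟨h1, h2⟩; exact ⟨(dvd_pow_self e two_ne_zero).trans h2, h2⟩
    rw [abs_moebius_eq_sum hg0, hsetg, Finset.sum_filter]
    push_cast
    rfl
  rw [stepA, Finset.sum_comm]
  -- Step B: inner sum as a count
  have stepB : ∀ e ∈ n.divisors,
      (∑ d ∈ A, if e ^ 2 ∣ Finset.univ.gcd d then (μ e : ℂ) else 0)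
        = (μ e : ℂ) * (if e ^ (2 * k) ∣ n then (tcount k (n / e ^ (2 * k)) : ℂ) else 0) := by
    intro e hee
    have he0 : e ≠ 0 := (Nat.pos_of_mem_divisors hee).ne'
    rw [← Finset.sum_filter]
    rw [Finset.sum_const]
    have hfilter : A.filter (fun d => e ^ 2 ∣ Finset.univ.gcd d)
        = (Fintype.piFinset fun _ : Fin k => n.divisors).filter
            (fun d => (∏ i, d i = n) ∧ ∀ i, e ^ 2 ∣ d i) := by
      rw [hA, Finset.filter_filter]
      refine Finset.filter_congr fun d hd => ?_
      simp [Finset.dvd_gcd_iff]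
    rw [hfilter]
    rw [nsmul_eq_mul, mul_comm, filtered_count hn he0]
  rw [Finset.sum_congr rfl stepB]
  -- Step C: rewrite the RHS convolution sum
  rw [Nat.sum_divisorsAntidiagonal (fun a b => Hseq k a * Tseq k b)]
  have stepC : ∀ a ∈ n.divisors,
      Hseq k a * Tseq k (n / a)
        = ∑ e ∈ n.divisors, if e ^ (2 * k) = a then (μ e : ℂ) * Tseq k (n / e ^ (2 * k))
            else 0 := by
    intro a haa
    have ha0 : a ≠ 0 := (Nat.pos_of_mem_divisors haa).ne'
    have han : a ∣ n := (Nat.mem_divisors.mp haa).1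
    have hset : a.divisors.filter (fun e => e ^ (2 * k) = a)
        = n.divisors.filter (fun e => e ^ (2 * k) = a) := by
      ext e
      simp only [Finset.mem_filter, Nat.mem_divisors, ha0, hn, and_true, ne_eq,
        not_false_eq_true]
      constructor
      · rintro ⟨h1, h2⟩; exact ⟨h1.trans han, h2⟩
      · rintro ⟨h1, h2⟩; exact ⟨h2 ▸ dvd_pow_self e (by omega : 2 * k ≠ 0), h2⟩
    rw [Hseq, hset, Finset.sum_filter, Finset.sum_mul]
    refine Finset.sum_congr rfl fun e hee => ?_
    split_ifs with h
    · rw [h]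
    · rw [zero_mul]
  rw [Finset.sum_congr rfl stepC, Finset.sum_comm]
  refine Finset.sum_congr rfl fun e hee => ?_
  rw [Finset.sum_ite_eq n.divisors (e ^ (2 * k)) (fun _ => (μ e : ℂ) * Tseq k (n / e ^ (2 * k)))]
  by_cases h : e ^ (2 * k) ∣ n <;>
    simp [Nat.mem_divisors, h, hn, Tseq]

open LSeries Complex in
lemma Hseq_apply_pow {k e : ℕ} (hk : k ≠ 0) (he : e ≠ 0) : Hseq k (e ^ (2 * k)) = (μ e : ℂ) := by
  have h2k : 2 * k ≠ 0 := by omega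
  have : (e ^ (2 * k)).divisors.filter (fun e' => e' ^ (2 * k) = e ^ (2 * k)) = {e} := by
    ext e'
    simp only [Finset.mem_filter, Nat.mem_divisors, Finset.mem_singleton]
    constructor
    · rintro ⟨-, h⟩
      exact Nat.pow_left_injective (by omega) h
    · rintro rfl
      exact ⟨⟨dvd_pow_self _ h2k, pow_ne_zero _ he⟩, rfl⟩
  rw [Hseq, this, Finset.sum_singleton]

lemma Hseq_apply_of_not_pow {k n : ℕ} (hn : n ∉ Set.range (fun e : ℕ => e ^ (2 * k))) :
    Hseq k n = 0 := by
  rw [Hseq, Finset.sum_eq_zero]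
  intro e he
  rw [Finset.mem_filter] at he
  exact absurd ⟨e, he.2⟩ hn

open LSeries Complex in
lemma term_Hseq_comp {k : ℕ} (hk : k ≠ 0) (s : ℂ) (e : ℕ) :
    LSeries.term (Hseq k) s (e ^ (2 * k)) = LSeries.term (fun n => (μ n : ℂ)) (2 * (k : ℂ) * s) e := by
  rcases eq_or_ne e 0 with rfl | he
  · rw [zero_pow (by omega : 2 * k ≠ 0), LSeries.term_zero, LSeries.term_zero]
  · have hpe : e ^ (2 * k) ≠ 0 := pow_ne_zero _ he
    rw [LSeries.term_of_ne_zero hpe, LSeries.term_of_ne_zero he, Hseq_apply_pow hk he]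
    congr 1
    have h1 : ((e ^ (2 * k) : ℕ) : ℂ) = (e : ℂ) ^ (2 * k) := by push_cast; ring
    have h2 : (2 * (k : ℂ) * s) = ((2 * k : ℕ) : ℂ) * s := by push_cast; ring
    rw [h1, h2, Complex.natCast_cpow_natCast_mul]

open LSeries Complex in
lemma LSeriesHasSum_Hseq {k : ℕ} (hk : 2 ≤ k) {s : ℂ} (hs : 1 < s.re) :
    LSeriesHasSum (Hseq k) s (1 / riemannZeta (2 * (k : ℂ) * s)) := by
  have hk0 : k ≠ 0 := by omega
  have hs2 : 1 < (2 * (k : ℂ) * s).re := by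
    have : (2 * (k : ℂ) * s).re = 2 * (k : ℝ) * s.re := by
      simp [Complex.mul_re]
    rw [this]
    have hk2 : (2 : ℝ) ≤ (k : ℝ) := by exact_mod_cast hk
    nlinarith
  have hμ : LSeriesSummable (fun n => (μ n : ℂ)) (2 * (k : ℂ) * s) :=
    ArithmeticFunction.LSeriesSummable_moebius_iff.mpr hs2
  have hJ : Function.Injective (fun e : ℕ => e ^ (2 * k)) :=
    Nat.pow_left_injective (by omega)
  have hsupp : ∀ n ∉ Set.range (fun e : ℕ => e ^ (2 * k)), LSeries.term (Hseq k) s n = 0 := by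
    intro n hn
    rcases eq_or_ne n 0 with rfl | hn0
    · exact LSeries.term_zero _ _
    · rw [LSeries.term_of_ne_zero hn0, Hseq_apply_of_not_pow hn, zero_div]
  have hcomp : (LSeries.term (Hseq k) s) ∘ (fun e : ℕ => e ^ (2 * k))
      = LSeries.term (fun n => (μ n : ℂ)) (2 * (k : ℂ) * s) := by
    funext e
    exact term_Hseq_comp hk0 s e
  have hsummable : LSeriesSummable (Hseq k) s := by
    rw [LSeriesSummable, ← Function.Injective.summable_iff hJ hsupp, hcomp]
    exact hμ
  have hval : LSeries (Hseq k) s = LSeries (fun n => (μ n : ℂ)) (2 * (k : ℂ) * s) := by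
    rw [LSeries, LSeries,
      ← Function.Injective.tsum_eq hJ (Function.support_subset_iff'.mpr hsupp)]
    exact tsum_congr fun e => term_Hseq_comp hk0 s e
  have hLμ : LSeries (fun n => (μ n : ℂ)) (2 * (k : ℂ) * s)
      = 1 / riemannZeta (2 * (k : ℂ) * s) := by
    have h1 := ArithmeticFunction.LSeries_zeta_mul_Lseries_moebius hs2
    have h2 := ArithmeticFunction.LSeries_zeta_eq_riemannZeta hs2
    have h3 := riemannZeta_ne_zero_of_one_lt_re hs2
    rw [h2] at h1
    field_simp
    rw [mul_comm] at h1
    exact h1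
  have := hsummable.LSeriesHasSum
  rwa [hval, hLμ] at this

open LSeries Complex in
lemma LSeriesHasSum_Tseq {k : ℕ} (hk : 2 ≤ k) {s : ℂ} (hs : 1 < s.re) :
    LSeriesHasSum (Tseq k) s (riemannZeta s ^ k) := by
  have hT : Tseq k = fun n => ((ζ : ArithmeticFunction ℂ) ^ k) n := by
    funext n
    rcases eq_or_ne n 0 with rfl | hn
    · rw [Tseq, tcount_zero (by omega : k ≠ 0)]
      simp
    · rw [Tseq, zeta_pow_apply hn]
  rw [hT]
  clear hT hk
  induction k with
  | zero =>
    rw [pow_zero, pow_zero]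
    have h1 : (fun n => ((1 : ArithmeticFunction ℂ)) n) = LSeries.delta := by
      funext n
      rw [one_apply, LSeries.delta]
    rw [h1]
    have : LSeriesSummable LSeries.delta s := by
      refine summable_of_ne_finset_zero (s := {1}) fun n hn => ?_
      rcases eq_or_ne n 0 with rfl | hn0
      · exact LSeries.term_zero _ _
      · rw [LSeries.term_of_ne_zero hn0, LSeries.delta, if_neg (by simpa using hn), zero_div]
    have hval := congrFun LSeries_delta s
    rw [Pi.one_apply] at hval
    exact hval ▸ this.LSeriesHasSum
  | succ k ihk =>
    rw [pow_succ, pow_succ]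
    have hz : LSeriesHasSum (fun n => (ζ : ArithmeticFunction ℂ) n) s (riemannZeta s) := by
      have : (fun n => ((ζ : ArithmeticFunction ℂ)) n) = fun n => ((ζ n : ℕ) : ℂ) := by
        funext n; rw [natCoe_apply]
      rw [this]
      exact ArithmeticFunction.LSeriesHasSum_zeta hs
    exact ArithmeticFunction.LSeriesHasSum_mul ihk hz

lemma fabsmuk_zero {k : ℕ} (hk : k ≠ 0) : fabsmuk k 0 = 0 := by
  rw [fabsmuk, Finset.sum_eq_zero]
  intro d hd
  rw [Finset.mem_filter, Fintype.mem_piFinset] at hd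
  have := hd.1 ⟨0, Nat.pos_of_ne_zero hk⟩
  simp at this

open scoped LSeries.notation in
lemma conv_eq {k : ℕ} (hk : 2 ≤ k) :
    (fun n => (fabsmuk k n : ℂ)) = (Hseq k) ⍟ (Tseq k) := by
  funext n
  rcases eq_or_ne n 0 with rfl | hn
  · rw [fabsmuk_zero (by omega : k ≠ 0), LSeries.convolution_map_zero]
    simp
  · rw [LSeries.convolution_def]
    exact main_identity hk hn

end Stmt5

/-- for `Re s > 1`, `∑ f_{|μ|,k}(n)/n^s` converges absolutely and equals
`ζ(s)^k / ζ(2ks)`. -/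
theorem stmt5 (k : ℕ) (hk : 2 ≤ k) (s : ℂ) (hs : 1 < s.re) :
    Summable (fun n : ℕ => ‖(fabsmuk k n : ℂ) / (n : ℂ) ^ s‖) ∧
    ∑' n : ℕ, (fabsmuk k n : ℂ) / (n : ℂ) ^ s
      = riemannZeta s ^ k / riemannZeta (2 * (k : ℂ) * s) := by
  have hH := Stmt5.LSeriesHasSum_Hseq hk hs
  have hT := Stmt5.LSeriesHasSum_Tseq hk hs
  have hConv := LSeriesHasSum.convolution hH hT
  rw [← Stmt5.conv_eq hk] at hConv
  have hterm : ∀ n : ℕ, LSeries.term (fun n => (fabsmuk k n : ℂ)) s n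
      = (fabsmuk k n : ℂ) / (n : ℂ) ^ s := by
    intro n
    rcases eq_or_ne n 0 with rfl | hn
    · rw [LSeries.term_zero, Stmt5.fabsmuk_zero (by omega : k ≠ 0)]
      simp
    · rw [LSeries.term_of_ne_zero hn]
  constructor
  · have hsummable := hConv.LSeriesSummable
    rw [LSeriesSummable] at hsummable
    have : (fun n : ℕ => ‖(fabsmuk k n : ℂ) / (n : ℂ) ^ s‖)
        = fun n => ‖LSeries.term (fun n => (fabsmuk k n : ℂ)) s n‖ := by
      funext n; rw [hterm]
    rw [this]
    exact summable_norm_iff.mpr hsummable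
  · have hval := hConv.LSeries_eq
    rw [LSeries] at hval
    calc ∑' n : ℕ, (fabsmuk k n : ℂ) / (n : ℂ) ^ s
        = ∑' n : ℕ, LSeries.term (fun n => (fabsmuk k n : ℂ)) s n := by
          exact tsum_congr fun n => (hterm n).symm
      _ = 1 / riemannZeta (2 * (k : ℂ) * s) * riemannZeta s ^ k := hval
      _ = riemannZeta s ^ k / riemannZeta (2 * (k : ℂ) * s) := by ring
end

section
/- For every real x ≥ 1 and integer k ≥ 2, ∑_{n ≤ x} f_{|μ|,k}(n) = ∑_{m ≤ x^{1/(2k)}} μ(m) · ∑_{n ≤ x/m^{2k}} τ_k(n), where f_{|μ|,k}(n) = ∑_{d₁⋯d_k = n} |μ(gcd(d₁,…,d_k))|. -/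
open Finset ArithmeticFunction
open scoped ArithmeticFunction.Moebius ArithmeticFunction.zeta


lemma sqpart_fact (g : ℕ) (hg : g ≠ 0) (q : ℕ) :
    (∏ p ∈ g.primeFactors, p ^ (g.factorization p / 2)).factorization q
      = g.factorization q / 2 := by
  rw [Nat.factorization_prod (fun p hp => pow_ne_zero _ (Nat.pos_of_mem_primeFactors hp).ne')]
  rw [Finsupp.finset_sum_apply]
  by_cases hq : q ∈ g.primeFactors
  · rw [Finset.sum_eq_single_of_mem q hq]
    · rw [(Nat.prime_of_mem_primeFactors hq).factorization_pow, Finsupp.single_apply, if_pos rfl]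
    · intro p hp hpq
      rw [(Nat.prime_of_mem_primeFactors hp).factorization_pow, Finsupp.single_apply, if_neg hpq]
  · have h0 : g.factorization q = 0 := by
      rw [← Nat.support_factorization] at hq
      exact Finsupp.notMem_support_iff.1 hq
    rw [h0, Nat.zero_div]
    exact Finset.sum_eq_zero fun p hp => by
      rw [(Nat.prime_of_mem_primeFactors hp).factorization_pow, Finsupp.single_apply,
        if_neg (fun hpq : p = q => hq (hpq ▸ hp))]

lemma absmu_eq (g : ℕ) (hg : g ≠ 0) :
    |μ g| = ∑ m ∈ g.divisors.filter (fun m => m ^ 2 ∣ g), μ m := by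
  set s : ℕ := ∏ p ∈ g.primeFactors, p ^ (g.factorization p / 2) with hs
  have hs0 : s ≠ 0 :=
    Finset.prod_ne_zero_iff.2 fun p hp => pow_ne_zero _ (Nat.pos_of_mem_primeFactors hp).ne'
  have hsf : ∀ q, s.factorization q = g.factorization q / 2 := fun q => by
    rw [hs]; exact sqpart_fact g hg q
  have hmem : ∀ m, m ∈ g.divisors.filter (fun m => m ^ 2 ∣ g) ↔ m ∈ s.divisors := by
    intro m
    rw [Finset.mem_filter, Nat.mem_divisors, Nat.mem_divisors]
    constructor
    · rintro ⟨⟨hmg, -⟩, hm2⟩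
      have hm0 : m ≠ 0 := by rintro rfl; exact hg (Nat.eq_zero_of_zero_dvd hmg)
      refine ⟨?_, hs0⟩
      rw [← Nat.factorization_le_iff_dvd hm0 hs0]
      intro q
      rw [hsf q, Nat.le_div_iff_mul_le two_pos]
      have := (Nat.factorization_le_iff_dvd (pow_ne_zero 2 hm0) hg).2 hm2 q
      simpa [Nat.factorization_pow, mul_comm] using this
    · rintro ⟨hms, -⟩
      have hm0 : m ≠ 0 := by rintro rfl; exact hs0 (Nat.eq_zero_of_zero_dvd hms)
      have h2 : m ^ 2 ∣ g := by
        rw [← Nat.factorization_le_iff_dvd (pow_ne_zero 2 hm0) hg]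
        intro q
        have := (Nat.factorization_le_iff_dvd hm0 hs0).2 hms q
        rw [hsf q, Nat.le_div_iff_mul_le two_pos] at this
        simpa [Nat.factorization_pow, mul_comm] using this
      exact ⟨⟨dvd_trans (dvd_pow_self m two_ne_zero) h2, hg⟩, h2⟩
  rw [Finset.sum_congr (Finset.ext hmem) (fun _ _ => rfl)]
  have hz : ∑ m ∈ s.divisors, μ m = (μ * (ζ : ArithmeticFunction ℤ)) s := by
    rw [coe_mul_zeta_apply]
  rw [hz, moebius_mul_coe_zeta, ArithmeticFunction.one_apply]
  have hsq : s = 1 ↔ Squarefree g := by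
    rw [Nat.squarefree_iff_factorization_le_one hg]
    constructor
    · intro h1 p
      have h2 := hsf p
      rw [h1] at h2
      have h3 : g.factorization p / 2 = 0 := by simpa using h2.symm
      rw [Nat.div_eq_zero_iff_lt two_pos] at h3
      omega
    · intro h
      rw [← Nat.factorization_prod_pow_eq_self hs0, Finsupp.prod]
      apply Finset.prod_eq_one
      intro p hp
      have : s.factorization p = 0 := by
        rw [hsf p, Nat.div_eq_zero_iff_lt two_pos]
        exact lt_of_le_of_lt (h p) one_lt_two
      rw [this, pow_zero]
  by_cases h : Squarefree g
  · rw [if_pos (hsq.2 h), moebius_apply_of_squarefree h, abs_pow, abs_neg, abs_one, one_pow]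
  · rw [moebius_eq_zero_of_not_squarefree h, if_neg (fun h1 => h (hsq.1 h1)), abs_zero]

lemma mem_T {k n : ℕ} (hn : n ≠ 0) (d : Fin k → ℕ) :
    d ∈ (Fintype.piFinset fun _ : Fin k => n.divisors).filter (fun f => ∏ i, f i = n) ↔
      ∏ i, d i = n := by
  rw [Finset.mem_filter, Fintype.mem_piFinset]
  constructor
  · exact fun h => h.2
  · intro h
    exact ⟨fun i => Nat.mem_divisors.2 ⟨h ▸ Finset.dvd_prod_of_mem d (Finset.mem_univ i), hn⟩, h⟩


/-- `∑_{n ≤ x} f_{|μ|,k}(n) = ∑_{m ≤ x^{1/(2k)}} μ(m) ∑_{n ≤ x/m^{2k}} τ_k(n)`. -/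
theorem stmt12 (x : ℝ) (hx : 1 ≤ x) (k : ℕ) (hk : 2 ≤ k) :
    ∑ n ∈ Finset.Icc 1 ⌊x⌋₊, fabsmuk k n
    = ∑ m ∈ Finset.Icc 1 ⌊x ^ ((2 * (k : ℝ))⁻¹)⌋₊,
        moebius m * ∑ n ∈ Finset.Icc 1 ⌊x / (m : ℝ) ^ (2 * k)⌋₊, (tauk k n : ℤ) := by
  have hk0 : 0 < k := by omega
  have hx0 : (0:ℝ) < x := lt_of_lt_of_le one_pos hx
  set T : ℕ → Finset (Fin k → ℕ) :=
    fun n => (Fintype.piFinset fun _ : Fin k => n.divisors).filter (fun f => ∏ i, f i = n)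
    with hT
  set F : (Fin k → ℕ) → Finset ℕ :=
    fun d => (Finset.univ.gcd d).divisors.filter (fun m => m ^ 2 ∣ Finset.univ.gcd d) with hF
  set A := (Finset.Icc 1 ⌊x⌋₊).sigma (fun n => (T n).sigma (fun d => F d)) with hA
  set B := (Finset.Icc 1 ⌊x ^ ((2 * (k : ℝ))⁻¹)⌋₊).sigma
      (fun m => (Finset.Icc 1 ⌊x / (m : ℝ) ^ (2 * k)⌋₊).sigma (fun n' => T n')) with hB
  have key : ∑ p ∈ A, μ p.2.2 = ∑ q ∈ B, μ q.1 := by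
    refine Finset.sum_nbij'
      (fun p => ⟨p.2.2, p.1 / p.2.2 ^ (2 * k), fun i => p.2.1 i / p.2.2 ^ 2⟩)
      (fun q => ⟨q.1 ^ (2 * k) * q.2.1, fun i => q.1 ^ 2 * q.2.2 i, q.1⟩)
      ?_ ?_ ?_ ?_ ?_
    · rintro ⟨n, d, m⟩ hp
      simp only [hA, Finset.mem_sigma, Finset.mem_Icc] at hp
      obtain ⟨hn, hd, hm⟩ := hp
      have hn0 : n ≠ 0 := by omega
      have hprod : ∏ i, d i = n := ((mem_T hn0 d).1 hd)
      rw [hF, Finset.mem_filter, Nat.mem_divisors] at hm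
      obtain ⟨⟨hmg, hg0⟩, hm2⟩ := hm
      have hm2d : ∀ i, m ^ 2 ∣ d i := fun i =>
        dvd_trans hm2 (Finset.gcd_dvd (Finset.mem_univ i))
      have hm0 : m ≠ 0 := by rintro rfl; exact hg0 (Nat.eq_zero_of_zero_dvd hmg)
      have hm2k : m ^ (2 * k) ∣ n := by
        rw [← hprod, pow_mul]
        calc (m ^ 2) ^ k = ∏ _i : Fin k, m ^ 2 := by
              rw [Finset.prod_const, Finset.card_univ, Fintype.card_fin]
          _ ∣ ∏ i, d i := Finset.prod_dvd_prod_of_dvd _ _ (fun i _ => hm2d i)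
      have hnx : (n : ℝ) ≤ x := (Nat.le_floor_iff hx0.le).1 hn.2
      have hmpow : ((m : ℝ)) ^ (2 * k) ≤ x := by
        calc ((m:ℝ)) ^ (2*k) = ((m ^ (2*k) : ℕ) : ℝ) := by push_cast; ring
          _ ≤ (n : ℝ) := by exact_mod_cast Nat.le_of_dvd (Nat.pos_of_ne_zero hn0) hm2k
          _ ≤ x := hnx
      have hmM : m ≤ ⌊x ^ ((2 * (k : ℝ))⁻¹)⌋₊ := by
        apply Nat.le_floor
        have h2k : (2 * (k:ℝ)) ≠ 0 := by positivity
        have : ((m:ℝ) ^ ((2 * k : ℕ):ℝ)) ^ ((2 * (k:ℝ))⁻¹) ≤ x ^ ((2 * (k:ℝ))⁻¹) := by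
          apply Real.rpow_le_rpow (by positivity) _ (by positivity)
          rw [Real.rpow_natCast]; exact hmpow
        rwa [show ((2 * k : ℕ):ℝ) = 2 * (k:ℝ) by push_cast; ring,
          ← Real.rpow_mul (by positivity), mul_inv_cancel₀ h2k, Real.rpow_one] at this
      have hmpos : 0 < m := Nat.pos_of_ne_zero hm0
      have hq : n / m ^ (2*k) ≠ 0 :=
        (Nat.div_pos (Nat.le_of_dvd (Nat.pos_of_ne_zero hn0) hm2k) (by positivity)).ne'
      simp only [hB, Finset.mem_sigma, Finset.mem_Icc]
      refine ⟨⟨hmpos, hmM⟩, ⟨Nat.pos_of_ne_zero hq, ?_⟩, ?_⟩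
      · apply Nat.le_floor
        rw [le_div_iff₀ (by positivity)]
        calc ((n / m ^ (2*k) : ℕ) : ℝ) * (m:ℝ) ^ (2*k)
            = ((n / m ^ (2*k) * m ^ (2*k) : ℕ) : ℝ) := by push_cast; ring
          _ = (n : ℝ) := by rw [Nat.div_mul_cancel hm2k]
          _ ≤ x := hnx
      · rw [mem_T hq]
        symm
        apply Nat.div_eq_of_eq_mul_left (by positivity)
        rw [← hprod, pow_mul]
        calc ∏ i, d i
            = ∏ i, (d i / m ^ 2 * m ^ 2) :=
              Finset.prod_congr rfl fun i _ => (Nat.div_mul_cancel (hm2d i)).symm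
          _ = (∏ i, d i / m ^ 2) * ∏ _i : Fin k, (m ^ 2) := Finset.prod_mul_distrib
          _ = (∏ i, d i / m ^ 2) * (m ^ 2) ^ k := by
              rw [Finset.prod_const, Finset.card_univ, Fintype.card_fin]
    · -- backward membership
      rintro ⟨m, n', e⟩ hq
      simp only [hB, Finset.mem_sigma, Finset.mem_Icc] at hq
      obtain ⟨⟨hm1, hmM⟩, ⟨hn'1, hn'f⟩, he⟩ := hq
      have hn'0 : n' ≠ 0 := by omega
      have hm0 : m ≠ 0 := by omega
      have hprod : ∏ i, e i = n' := (mem_T hn'0 e).1 he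
      have he0 : ∀ i, e i ≠ 0 := fun i hi => hn'0 (by
        rw [← hprod]; exact Finset.prod_eq_zero (Finset.mem_univ i) hi)
      have hdprod : ∏ i, m ^ 2 * e i = m ^ (2 * k) * n' := by
        rw [Finset.prod_mul_distrib, hprod, Finset.prod_const, Finset.card_univ,
          Fintype.card_fin, ← pow_mul]
      have hn0 : m ^ (2 * k) * n' ≠ 0 := by positivity
      have hg0 : Finset.univ.gcd (fun i => m ^ 2 * e i) ≠ 0 := by
        intro h
        rw [Finset.gcd_eq_zero_iff] at h
        have := h ⟨0, hk0⟩ (Finset.mem_univ _)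
        exact Nat.mul_ne_zero (pow_ne_zero _ hm0) (he0 _) this
      have hgcd2 : m ^ 2 ∣ Finset.univ.gcd (fun i => m ^ 2 * e i) :=
        Finset.dvd_gcd fun i _ => dvd_mul_right _ _
      simp only [hA, Finset.mem_sigma, Finset.mem_Icc]
      refine ⟨⟨Nat.pos_of_ne_zero hn0, ?_⟩, ?_, ?_⟩
      · apply Nat.le_floor
        have hr : (n' : ℝ) ≤ x / (m : ℝ) ^ (2 * k) :=
          (Nat.le_floor_iff (by positivity)).1 hn'f
        have := (le_div_iff₀' (by positivity : (0:ℝ) < (m:ℝ) ^ (2*k))).1 hr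
        calc ((m ^ (2*k) * n' : ℕ) : ℝ) = (m:ℝ) ^ (2*k) * (n':ℝ) := by push_cast; ring
          _ ≤ x := this
      · rw [mem_T hn0]
        exact hdprod
      · rw [hF, Finset.mem_filter, Nat.mem_divisors]
        exact ⟨⟨dvd_trans (dvd_pow_self m two_ne_zero) hgcd2, hg0⟩, hgcd2⟩
    · -- left inverse
      rintro ⟨n, d, m⟩ hp
      simp only [hA, Finset.mem_sigma, Finset.mem_Icc] at hp
      obtain ⟨hn, hd, hm⟩ := hp
      have hn0 : n ≠ 0 := by omega
      have hprod : ∏ i, d i = n := (mem_T hn0 d).1 hd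
      rw [hF, Finset.mem_filter, Nat.mem_divisors] at hm
      obtain ⟨⟨hmg, hg0⟩, hm2⟩ := hm
      have hm2d : ∀ i, m ^ 2 ∣ d i := fun i =>
        dvd_trans hm2 (Finset.gcd_dvd (Finset.mem_univ i))
      have hm2k : m ^ (2 * k) ∣ n := by
        rw [← hprod, pow_mul]
        calc (m ^ 2) ^ k = ∏ _i : Fin k, m ^ 2 := by
              rw [Finset.prod_const, Finset.card_univ, Fintype.card_fin]
          _ ∣ ∏ i, d i := Finset.prod_dvd_prod_of_dvd _ _ (fun i _ => hm2d i)
      dsimp only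
      have hfd : (fun i => m ^ 2 * (d i / m ^ 2)) = d :=
        funext fun i => Nat.mul_div_cancel' (hm2d i)
      rw [Nat.mul_div_cancel' hm2k, hfd]
    · -- right inverse
      rintro ⟨m, n', e⟩ hq
      simp only [hB, Finset.mem_sigma, Finset.mem_Icc] at hq
      obtain ⟨⟨hm1, -⟩, -⟩ := hq
      have hmpos : 0 < m ^ 2 := by positivity
      have hmpos' : 0 < m ^ (2 * k) := by positivity
      dsimp only
      have hfe : (fun i => m ^ 2 * e i / m ^ 2) = e :=
        funext fun i => Nat.mul_div_cancel_left _ hmpos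
      rw [Nat.mul_div_cancel_left _ hmpos', hfe]
    · rintro ⟨n, d, m⟩ _
      rfl
  have hL : ∑ n ∈ Finset.Icc 1 ⌊x⌋₊, fabsmuk k n = ∑ p ∈ A, μ p.2.2 := by
    rw [hA, Finset.sum_sigma]
    refine Finset.sum_congr rfl fun n hn => ?_
    rw [Finset.sum_sigma]
    rw [Finset.mem_Icc] at hn
    have hn0 : n ≠ 0 := by omega
    show fabsmuk k n = ∑ d ∈ T n, ∑ m ∈ F d, μ m
    unfold fabsmuk
    refine Finset.sum_congr rfl fun d hd => ?_
    have hprod : ∏ i, d i = n := (mem_T hn0 d).1 hd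
    have hg0 : Finset.univ.gcd d ≠ 0 := by
      intro h
      rw [Finset.gcd_eq_zero_iff] at h
      exact hn0 (by rw [← hprod]
                    exact Finset.prod_eq_zero (Finset.mem_univ ⟨0, hk0⟩)
                      (h _ (Finset.mem_univ _)))
    exact absmu_eq _ hg0
  have hR : ∑ q ∈ B, μ q.1
      = ∑ m ∈ Finset.Icc 1 ⌊x ^ ((2 * (k : ℝ))⁻¹)⌋₊,
          μ m * ∑ n ∈ Finset.Icc 1 ⌊x / (m : ℝ) ^ (2 * k)⌋₊, (tauk k n : ℤ) := by
    rw [hB, Finset.sum_sigma]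
    refine Finset.sum_congr rfl fun m _ => ?_
    rw [Finset.sum_sigma, Finset.mul_sum]
    refine Finset.sum_congr rfl fun n' _ => ?_
    show ∑ _e ∈ T n', μ m = μ m * (tauk k n' : ℤ)
    rw [Finset.sum_const, nsmul_eq_mul, mul_comm]
    rfl
  rw [hL, key, hR]
end

section
/- Assuming ∑_{n ≤ y} τ(n) = y log y + (2γ−1)y + Δ(y) for all y ≥ 1, one has for all x ≥ 1: ∑_{n ≤ x} f_μ(n) = x(log x + 2γ − 1)·∑_{m ≤ √x} (μ*μ)(m)/m² − 2x·∑_{m ≤ √x} (μ*μ)(m)(log m)/m² + ∑_{m ≤ √x} (μ*μ)(m)·Δ(x/m²). -/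
open Finset ArithmeticFunction

/-- `f_μ(n) = ∑_{d₁d₂ = n} μ(gcd(d₁,d₂))`. -/
def fmu (n : ℕ) : ℤ :=
  ∑ p ∈ n.divisorsAntidiagonal, moebius (Nat.gcd p.1 p.2)

lemma moeb_eq_sum_divisors (k : ℕ) :
    (moebius k : ℤ) = ∑ i ∈ k.divisors, (moebius * moebius) i := by
  have h : ((moebius * moebius) * (zeta : ArithmeticFunction ℤ) : ArithmeticFunction ℤ)
      = moebius := by
    rw [mul_assoc, moebius_mul_coe_zeta, mul_one]
  conv_lhs => rw [← h]
  exact coe_mul_zeta_apply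

lemma core (N : ℕ) :
    (∑ n ∈ Icc 1 N, fmu n)
      = ∑ m ∈ Icc 1 (Nat.sqrt N),
          ((moebius * moebius) m : ℤ) * ∑ k ∈ Icc 1 (N / m ^ 2), (k.divisors.card : ℤ) := by
  have hL : (∑ n ∈ Icc 1 N, fmu n)
      = ∑ a ∈ (Icc 1 N).sigma (fun n =>
          (n.divisorsAntidiagonal).sigma (fun p => (Nat.gcd p.1 p.2).divisors)),
          ((moebius * moebius) a.2.2 : ℤ) := by
    rw [Finset.sum_sigma]
    refine Finset.sum_congr rfl fun n _ => ?_
    rw [Finset.sum_sigma]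
    refine Finset.sum_congr rfl fun p _ => ?_
    exact moeb_eq_sum_divisors _
  have hR : (∑ m ∈ Icc 1 (Nat.sqrt N),
        ((moebius * moebius) m : ℤ) * ∑ k ∈ Icc 1 (N / m ^ 2), (k.divisors.card : ℤ))
      = ∑ b ∈ (Icc 1 (Nat.sqrt N)).sigma (fun m =>
          (Icc 1 (N / m ^ 2)).sigma (fun k => k.divisorsAntidiagonal)),
          ((moebius * moebius) b.1 : ℤ) := by
    rw [Finset.sum_sigma]
    refine Finset.sum_congr rfl fun m _ => ?_
    rw [Finset.sum_sigma, Finset.mul_sum]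
    refine Finset.sum_congr rfl fun k _ => ?_
    calc ((moebius * moebius) m : ℤ) * (k.divisors.card : ℤ)
        = ∑ _s ∈ k.divisorsAntidiagonal, ((moebius * moebius) m : ℤ) := by
          rw [Finset.sum_const, ← Nat.map_div_right_divisors, Finset.card_map,
            nsmul_eq_mul, mul_comm]
      _ = _ := rfl
  rw [hL, hR]
  refine Finset.sum_nbij'
    (fun a => ⟨a.2.2, ⟨a.1 / a.2.2 ^ 2, (a.2.1.1 / a.2.2, a.2.1.2 / a.2.2)⟩⟩)
    (fun b => ⟨b.1 ^ 2 * b.2.1, ⟨(b.1 * b.2.2.1, b.1 * b.2.2.2), b.1⟩⟩)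
    ?_ ?_ ?_ ?_ ?_
  · rintro ⟨n, ⟨p1, p2⟩, m⟩ ha
    simp only [Finset.mem_sigma, Nat.mem_divisorsAntidiagonal, Nat.mem_divisors,
      Finset.mem_Icc] at ha ⊢
    obtain ⟨⟨hn1, hnN⟩, ⟨hpn, hn0⟩, ⟨hmg, hg0⟩⟩ := ha
    have hm1 : m ∣ p1 := hmg.trans (Nat.gcd_dvd_left _ _)
    have hm2 : m ∣ p2 := hmg.trans (Nat.gcd_dvd_right _ _)
    have hmn : m ^ 2 ∣ n := by
      rw [← hpn, pow_two]; exact mul_dvd_mul hm1 hm2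
    have hm0 : m ≠ 0 := by
      rintro rfl; exact hg0 (Nat.eq_zero_of_zero_dvd hmg)
    have hm2n : m ^ 2 ≤ n := Nat.le_of_dvd (Nat.pos_of_ne_zero hn0) hmn
    refine ⟨⟨Nat.one_le_iff_ne_zero.mpr hm0, Nat.le_sqrt'.mpr (hm2n.trans hnN)⟩,
      ⟨(Nat.one_le_div_iff (by positivity)).mpr hm2n, Nat.div_le_div_right hnN⟩, ?_, ?_⟩
    · rw [Nat.div_mul_div_comm hm1 hm2, hpn, ← pow_two]
    · exact Nat.div_ne_zero_iff.mpr ⟨by positivity, hm2n⟩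
  · rintro ⟨m, k, ⟨q1, q2⟩⟩ hb
    simp only [Finset.mem_sigma, Nat.mem_divisorsAntidiagonal, Nat.mem_divisors,
      Finset.mem_Icc] at hb ⊢
    obtain ⟨⟨hm1, hms⟩, ⟨hk1, hkN⟩, ⟨hq, hk0⟩⟩ := hb
    have hm0 : 0 < m := hm1
    have hq1 : 0 < q1 := Nat.pos_of_ne_zero fun h => hk0 (by rw [← hq, h, zero_mul])
    have hq2 : 0 < q2 := Nat.pos_of_ne_zero fun h => hk0 (by rw [← hq, h, mul_zero])
    have hn : m ^ 2 * k ≤ N := by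
      have h2 := (Nat.le_div_iff_mul_le (by positivity : 0 < m ^ 2)).mp hkN
      calc m ^ 2 * k = k * m ^ 2 := mul_comm _ _
        _ ≤ N := h2
    refine ⟨⟨Nat.one_le_iff_ne_zero.mpr (by positivity), hn⟩, ⟨?_, by positivity⟩, ?_, ?_⟩
    · calc m * q1 * (m * q2) = m ^ 2 * (q1 * q2) := by ring
        _ = m ^ 2 * k := by rw [hq]
    · exact Nat.dvd_gcd (Dvd.intro _ rfl) (Dvd.intro _ rfl)
    · simp only [ne_eq, Nat.gcd_eq_zero_iff, not_and]
      intro h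
      exact absurd h (by positivity)
  · rintro ⟨n, ⟨p1, p2⟩, m⟩ ha
    simp only [Finset.mem_sigma, Nat.mem_divisorsAntidiagonal, Nat.mem_divisors,
      Finset.mem_Icc] at ha
    obtain ⟨⟨hn1, hnN⟩, ⟨hpn, hn0⟩, ⟨hmg, hg0⟩⟩ := ha
    have hm1 : m ∣ p1 := hmg.trans (Nat.gcd_dvd_left _ _)
    have hm2 : m ∣ p2 := hmg.trans (Nat.gcd_dvd_right _ _)
    have hmn : m ^ 2 ∣ n := by rw [← hpn, pow_two]; exact mul_dvd_mul hm1 hm2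
    simp only [Nat.mul_div_cancel' hmn, Nat.mul_div_cancel' hm1, Nat.mul_div_cancel' hm2]
  · rintro ⟨m, k, ⟨q1, q2⟩⟩ hb
    simp only [Finset.mem_sigma, Nat.mem_divisorsAntidiagonal, Nat.mem_divisors,
      Finset.mem_Icc] at hb
    obtain ⟨⟨hm1, hms⟩, ⟨hk1, hkN⟩, ⟨hq, hk0⟩⟩ := hb
    have hm0 : 0 < m := hm1
    simp only [Nat.mul_div_cancel_left _ (by positivity : 0 < m ^ 2),
      Nat.mul_div_cancel_left _ hm0]
  · rintro ⟨n, p, m⟩ _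
    rfl

/-- the expansion of `∑_{n ≤ x} f_μ(n)` via the divisor-sum asymptotics. -/
theorem stmt13 (Δ : ℝ → ℝ)
    (hΔ : ∀ y : ℝ, 1 ≤ y →
      (∑ n ∈ Finset.Icc 1 ⌊y⌋₊, (n.divisors.card : ℝ))
        = y * Real.log y + (2 * Real.eulerMascheroniConstant - 1) * y + Δ y)
    (x : ℝ) (hx : 1 ≤ x) :
    (∑ n ∈ Finset.Icc 1 ⌊x⌋₊, (fmu n : ℝ))
      = x * (Real.log x + 2 * Real.eulerMascheroniConstant - 1) *
          ∑ m ∈ Finset.Icc 1 ⌊Real.sqrt x⌋₊, ((moebius * moebius) m : ℝ) / (m : ℝ) ^ 2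
        - 2 * x * ∑ m ∈ Finset.Icc 1 ⌊Real.sqrt x⌋₊,
            ((moebius * moebius) m : ℝ) * Real.log m / (m : ℝ) ^ 2
        + ∑ m ∈ Finset.Icc 1 ⌊Real.sqrt x⌋₊,
            ((moebius * moebius) m : ℝ) * Δ (x / (m : ℝ) ^ 2) := by
  have hx0 : (0 : ℝ) < x := lt_of_lt_of_le one_pos hx
  have hsq : ⌊Real.sqrt x⌋₊ = Nat.sqrt ⌊x⌋₊ := by
    apply le_antisymm
    · rw [Nat.le_sqrt']
      apply Nat.le_floor
      push_cast
      calc ((⌊Real.sqrt x⌋₊ : ℝ)) ^ 2 ≤ (Real.sqrt x) ^ 2 := by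
            apply pow_le_pow_left₀ (by positivity)
            exact Nat.floor_le (Real.sqrt_nonneg x)
        _ = x := Real.sq_sqrt hx0.le
    · apply Nat.le_floor
      rw [show ((Nat.sqrt ⌊x⌋₊ : ℕ) : ℝ) = ((Nat.sqrt ⌊x⌋₊ : ℕ) : ℝ) from rfl]
      have h1 : ((Nat.sqrt ⌊x⌋₊ : ℕ) : ℝ) ^ 2 ≤ x := by
        have := Nat.sqrt_le' ⌊x⌋₊
        calc ((Nat.sqrt ⌊x⌋₊ : ℕ) : ℝ) ^ 2 = ((Nat.sqrt ⌊x⌋₊ ^ 2 : ℕ) : ℝ) := by push_cast; ring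
          _ ≤ (⌊x⌋₊ : ℝ) := by exact_mod_cast this
          _ ≤ x := Nat.floor_le hx0.le
      nlinarith [Real.sq_sqrt hx0.le, Real.sqrt_nonneg x,
        (show (0:ℝ) ≤ ((Nat.sqrt ⌊x⌋₊ : ℕ) : ℝ) from by positivity)]
  -- key facts for each m in range
  have hmem : ∀ m ∈ Finset.Icc 1 ⌊Real.sqrt x⌋₊, (0 : ℝ) < (m : ℝ) ∧ (m : ℝ) ^ 2 ≤ x := by
    intro m hm
    rw [Finset.mem_Icc] at hm
    have hm1 : 1 ≤ m := hm.1
    have hmx : (m : ℝ) ≤ Real.sqrt x := by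
      calc (m : ℝ) ≤ (⌊Real.sqrt x⌋₊ : ℝ) := by exact_mod_cast hm.2
        _ ≤ Real.sqrt x := Nat.floor_le (Real.sqrt_nonneg x)
    refine ⟨by exact_mod_cast hm1, ?_⟩
    calc (m : ℝ) ^ 2 ≤ (Real.sqrt x) ^ 2 := by
          apply pow_le_pow_left₀ (by positivity) hmx
      _ = x := Real.sq_sqrt hx0.le
  have key : (∑ n ∈ Finset.Icc 1 ⌊x⌋₊, (fmu n : ℝ))
      = ∑ m ∈ Finset.Icc 1 ⌊Real.sqrt x⌋₊, ((moebius * moebius) m : ℝ) *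
          ∑ k ∈ Finset.Icc 1 ⌊x / (m : ℝ) ^ 2⌋₊, (k.divisors.card : ℝ) := by
    have := core ⌊x⌋₊
    have hcast : (∑ n ∈ Finset.Icc 1 ⌊x⌋₊, (fmu n : ℝ))
        = ((∑ n ∈ Finset.Icc 1 ⌊x⌋₊, fmu n : ℤ) : ℝ) := by push_cast; ring
    rw [hcast, this, hsq]
    push_cast
    refine Finset.sum_congr rfl fun m hm => ?_
    rw [← hsq] at hm
    congr 2
    have : ⌊x / ((m : ℝ)) ^ 2⌋₊ = ⌊x⌋₊ / m ^ 2 := by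
      have : ((m : ℝ)) ^ 2 = ((m ^ 2 : ℕ) : ℝ) := by push_cast; ring
      rw [this, Nat.floor_div_natCast]
    rw [this]
  rw [key]
  have step : ∀ m ∈ Finset.Icc 1 ⌊Real.sqrt x⌋₊,
      ((moebius * moebius) m : ℝ) *
          ∑ k ∈ Finset.Icc 1 ⌊x / (m : ℝ) ^ 2⌋₊, (k.divisors.card : ℝ)
        = x * (Real.log x + 2 * Real.eulerMascheroniConstant - 1) *
            (((moebius * moebius) m : ℝ) / (m : ℝ) ^ 2)
          - 2 * x * (((moebius * moebius) m : ℝ) * Real.log m / (m : ℝ) ^ 2)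
          + ((moebius * moebius) m : ℝ) * Δ (x / (m : ℝ) ^ 2) := by
    intro m hm
    obtain ⟨hm0, hm2x⟩ := hmem m hm
    have hy1 : (1 : ℝ) ≤ x / (m : ℝ) ^ 2 := (one_le_div (by positivity)).mpr hm2x
    rw [hΔ _ hy1]
    have hlog : Real.log (x / (m : ℝ) ^ 2) = Real.log x - 2 * Real.log m := by
      rw [Real.log_div (ne_of_gt hx0) (by positivity), Real.log_pow]
      push_cast; ring
    rw [hlog]
    have hm0' : (m : ℝ) ^ 2 ≠ 0 := by positivity
    field_simp
    ring
  rw [Finset.sum_congr rfl step, Finset.sum_add_distrib, Finset.sum_sub_distrib,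
    ← Finset.mul_sum, ← Finset.mul_sum]
end

section
/- For every real x ≥ 1 and real Y with 1 ≤ Y ≤ √x: ∑_{n ≤ x} f_μ(n) = ∑_{ℓ ≤ Y} (μ*μ)(ℓ) D(x/ℓ²) + ∑_{mℓ² ≤ x, ℓ > Y} (μ*μ)(ℓ) τ(m), where D(y) = ∑_{n ≤ y} τ(n) and f_μ(n) = ∑_{d₁d₂ = n} μ(gcd(d₁,d₂)). -/
open Finset ArithmeticFunction

/-- `f_μ(n) = ∑_{d₁d₂ = n} μ(gcd(d₁,d₂))`. -/
lemma mu_eq_sum_mu2 (g : ℕ) (hg : g ≠ 0) :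
    moebius g = ∑ ℓ ∈ g.divisors, (moebius * moebius) ℓ := by
  have h : (moebius * moebius * ((ArithmeticFunction.zeta : ArithmeticFunction ℕ) : ArithmeticFunction ℤ) : ArithmeticFunction ℤ) = moebius := by
    rw [mul_assoc, moebius_mul_coe_zeta, mul_one]
  conv_lhs => rw [← h]
  exact ArithmeticFunction.coe_mul_zeta_apply

lemma card_antidiag (n : ℕ) : n.divisorsAntidiagonal.card = n.divisors.card := by
  rw [← Nat.map_div_right_divisors, Finset.card_map]

lemma step1 (N : ℕ) :
    ∑ n ∈ Finset.Icc 1 N, fmu n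
    = ∑ p ∈ ((Finset.Icc 1 N) ×ˢ (Finset.Icc 1 N)).filter (fun p => p.1 * p.2 ≤ N),
        moebius (Nat.gcd p.1 p.2) := by
  simp only [fmu]
  rw [Finset.sum_sigma']
  refine Finset.sum_nbij' (fun s => s.2) (fun p => ⟨p.1 * p.2, p⟩) ?_ ?_ ?_ ?_ ?_
  · rintro ⟨n, d1, d2⟩ hs
    simp only [Finset.mem_sigma, Finset.mem_Icc, Nat.mem_divisorsAntidiagonal] at hs
    obtain ⟨⟨hn1, hn2⟩, hd, hn0⟩ := hs
    have h1 : 1 ≤ d1 := Nat.pos_of_ne_zero (by rintro rfl; simp at hd; omega)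
    have h2 : 1 ≤ d2 := Nat.pos_of_ne_zero (by rintro rfl; simp at hd; omega)
    simp only [Finset.mem_filter, Finset.mem_product, Finset.mem_Icc]
    refine ⟨⟨⟨h1, ?_⟩, h2, ?_⟩, by omega⟩ <;> nlinarith
  · rintro ⟨d1, d2⟩ hp
    simp only [Finset.mem_filter, Finset.mem_product, Finset.mem_Icc] at hp
    obtain ⟨⟨⟨h1, _⟩, h2, _⟩, h3⟩ := hp
    exact Finset.mem_sigma.2 ⟨Finset.mem_Icc.2
      ⟨Nat.one_le_iff_ne_zero.2 (Nat.mul_ne_zero (by omega) (by omega)), h3⟩,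
      Nat.mem_divisorsAntidiagonal.2 ⟨rfl, Nat.mul_ne_zero (by omega) (by omega)⟩⟩
  · rintro ⟨n, d1, d2⟩ hs
    simp only [Finset.mem_sigma, Nat.mem_divisorsAntidiagonal] at hs
    simp [hs.2.1]
  · rintro ⟨d1, d2⟩ _; rfl
  · rintro ⟨n, d1, d2⟩ _; rfl

lemma step3 (x : ℝ) (hx : 1 ≤ x) :
    ∑ p ∈ ((Finset.Icc 1 ⌊x⌋₊) ×ˢ (Finset.Icc 1 ⌊x⌋₊)).filter
        (fun p => p.1 * p.2 ≤ ⌊x⌋₊),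
        moebius (Nat.gcd p.1 p.2)
    = ∑ q ∈ ((Finset.Icc 1 ⌊x⌋₊) ×ˢ (Finset.Icc 1 ⌊x⌋₊)).filter
          (fun q => (q.1 : ℝ) * (q.2 : ℝ) ^ 2 ≤ x),
        (moebius * moebius) q.2 * (q.1.divisors.card : ℤ) := by
  have hx0 : (0:ℝ) ≤ x := by linarith
  have hNx : ((⌊x⌋₊ : ℕ) : ℝ) ≤ x := Nat.floor_le hx0
  have e1 : ∑ p ∈ ((Finset.Icc 1 ⌊x⌋₊) ×ˢ (Finset.Icc 1 ⌊x⌋₊)).filter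
        (fun p => p.1 * p.2 ≤ ⌊x⌋₊), moebius (Nat.gcd p.1 p.2)
      = ∑ s ∈ (((Finset.Icc 1 ⌊x⌋₊) ×ˢ (Finset.Icc 1 ⌊x⌋₊)).filter
          (fun p => p.1 * p.2 ≤ ⌊x⌋₊)).sigma
          (fun p => (Nat.gcd p.1 p.2).divisors),
          (moebius * moebius) s.2 := by
    rw [Finset.sum_sigma]
    refine Finset.sum_congr rfl fun p hp => mu_eq_sum_mu2 _ ?_
    simp only [Finset.mem_filter, Finset.mem_product, Finset.mem_Icc] at hp
    have h1 := hp.1.1.1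
    simp only [ne_eq, Nat.gcd_eq_zero_iff, not_and]
    intro h; omega
  have e3 : ∑ q ∈ ((Finset.Icc 1 ⌊x⌋₊) ×ˢ (Finset.Icc 1 ⌊x⌋₊)).filter
          (fun q => (q.1 : ℝ) * (q.2 : ℝ) ^ 2 ≤ x),
        (moebius * moebius) q.2 * (q.1.divisors.card : ℤ)
      = ∑ s ∈ (((Finset.Icc 1 ⌊x⌋₊) ×ˢ (Finset.Icc 1 ⌊x⌋₊)).filter
          (fun q => (q.1 : ℝ) * (q.2 : ℝ) ^ 2 ≤ x)).sigma
          (fun q => q.1.divisorsAntidiagonal),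
          (moebius * moebius) s.1.2 := by
    rw [Finset.sum_sigma]
    refine Finset.sum_congr rfl fun q _ => ?_
    dsimp only
    rw [Finset.sum_const, card_antidiag, nsmul_eq_mul, mul_comm]
  rw [e1, e3]
  refine Finset.sum_nbij'
    (fun s => ⟨(s.1.1 / s.2 * (s.1.2 / s.2), s.2), (s.1.1 / s.2, s.1.2 / s.2)⟩)
    (fun t => ⟨(t.1.2 * t.2.1, t.1.2 * t.2.2), t.1.2⟩) ?_ ?_ ?_ ?_ ?_
  · rintro ⟨⟨d1, d2⟩, ℓ⟩ hs
    simp only [Finset.mem_sigma, Finset.mem_filter, Finset.mem_product,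
      Finset.mem_Icc, Nat.mem_divisors] at hs
    obtain ⟨⟨⟨⟨hd11, hd12⟩, hd21, hd22⟩, hdN⟩, hld, _⟩ := hs
    have hl1 : ℓ ∣ d1 := hld.trans (Nat.gcd_dvd_left _ _)
    have hl2 : ℓ ∣ d2 := hld.trans (Nat.gcd_dvd_right _ _)
    have hlpos : 0 < ℓ := Nat.pos_of_ne_zero (by rintro rfl; omega)
    have he1 : 1 ≤ d1 / ℓ := (Nat.one_le_div_iff hlpos).2 (Nat.le_of_dvd (by omega) hl1)
    have he2 : 1 ≤ d2 / ℓ := (Nat.one_le_div_iff hlpos).2 (Nat.le_of_dvd (by omega) hl2)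
    have hprod : d1 / ℓ * (d2 / ℓ) * ℓ ^ 2 = d1 * d2 := by
      rw [pow_two]
      calc d1 / ℓ * (d2 / ℓ) * (ℓ * ℓ) = d1 / ℓ * ℓ * (d2 / ℓ * ℓ) := by ring
        _ = d1 * d2 := by rw [Nat.div_mul_cancel hl1, Nat.div_mul_cancel hl2]
    have hle : d1 / ℓ * (d2 / ℓ) ≤ ⌊x⌋₊ := by
      calc d1 / ℓ * (d2 / ℓ) ≤ d1 / ℓ * (d2 / ℓ) * ℓ ^ 2 :=
            Nat.le_mul_of_pos_right _ (by positivity)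
        _ = d1 * d2 := hprod
        _ ≤ ⌊x⌋₊ := hdN
    refine Finset.mem_sigma.2 ⟨Finset.mem_filter.2 ⟨Finset.mem_product.2
      ⟨Finset.mem_Icc.2 ⟨Nat.mul_pos he1 he2, hle⟩,
       Finset.mem_Icc.2 ⟨hlpos, le_trans (Nat.le_of_dvd (by omega) hl1) hd12⟩⟩, ?_⟩,
      Nat.mem_divisorsAntidiagonal.2 ⟨rfl, (Nat.mul_pos he1 he2).ne'⟩⟩
    calc ((d1 / ℓ * (d2 / ℓ) : ℕ) : ℝ) * (ℓ : ℝ) ^ 2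
        = ((d1 / ℓ * (d2 / ℓ) * ℓ ^ 2 : ℕ) : ℝ) := by push_cast; ring
      _ = ((d1 * d2 : ℕ) : ℝ) := by rw [hprod]
      _ ≤ ((⌊x⌋₊ : ℕ) : ℝ) := by exact_mod_cast hdN
      _ ≤ x := hNx
  · rintro ⟨⟨m, ℓ⟩, f1, f2⟩ ht
    simp only [Finset.mem_sigma, Finset.mem_filter, Finset.mem_product,
      Finset.mem_Icc, Nat.mem_divisorsAntidiagonal] at ht
    obtain ⟨⟨⟨⟨hm1, _⟩, hl1, hl2⟩, hmx⟩, he, hm0⟩ := ht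
    have hf1 : 1 ≤ f1 := Nat.pos_of_ne_zero (by rintro rfl; simp at he; omega)
    have hf2 : 1 ≤ f2 := Nat.pos_of_ne_zero (by rintro rfl; simp at he; omega)
    have hprodN : ℓ * f1 * (ℓ * f2) ≤ ⌊x⌋₊ := by
      apply Nat.le_floor
      calc ((ℓ * f1 * (ℓ * f2) : ℕ) : ℝ) = ((m:ℕ):ℝ) * (ℓ:ℝ)^2 := by
            rw [← he]; push_cast; ring
        _ ≤ x := hmx
    refine Finset.mem_sigma.2 ⟨Finset.mem_filter.2 ⟨Finset.mem_product.2
      ⟨Finset.mem_Icc.2 ⟨Nat.mul_pos hl1 hf1,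
          le_trans (Nat.le_mul_of_pos_right _ (Nat.mul_pos hl1 hf2)) hprodN⟩,
       Finset.mem_Icc.2 ⟨Nat.mul_pos hl1 hf2,
          le_trans (Nat.le_mul_of_pos_left _ (Nat.mul_pos hl1 hf1)) hprodN⟩⟩, hprodN⟩,
      Nat.mem_divisors.2 ⟨Nat.dvd_gcd (dvd_mul_right _ _) (dvd_mul_right _ _), ?_⟩⟩
    simp only [ne_eq, Nat.gcd_eq_zero_iff, not_and]
    intro h; exact absurd h (Nat.mul_pos hl1 hf1).ne'
  · rintro ⟨⟨d1, d2⟩, ℓ⟩ hs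
    simp only [Finset.mem_sigma, Finset.mem_filter, Finset.mem_product,
      Finset.mem_Icc, Nat.mem_divisors] at hs
    have hl1 : ℓ ∣ d1 := hs.2.1.trans (Nat.gcd_dvd_left _ _)
    have hl2 : ℓ ∣ d2 := hs.2.1.trans (Nat.gcd_dvd_right _ _)
    show (⟨(ℓ * (d1 / ℓ), ℓ * (d2 / ℓ)), ℓ⟩ : Σ _ : ℕ × ℕ, ℕ) = _
    rw [Nat.mul_div_cancel' hl1, Nat.mul_div_cancel' hl2]
  · rintro ⟨⟨m, ℓ⟩, f1, f2⟩ ht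
    simp only [Finset.mem_sigma, Finset.mem_filter, Finset.mem_product,
      Finset.mem_Icc, Nat.mem_divisorsAntidiagonal] at ht
    have hlpos : 0 < ℓ := by
      have := ht.1.1.2.1; omega
    show (⟨(ℓ * f1 / ℓ * (ℓ * f2 / ℓ), ℓ), (ℓ * f1 / ℓ, ℓ * f2 / ℓ)⟩ :
        Σ _ : ℕ × ℕ, ℕ × ℕ) = _
    rw [Nat.mul_div_cancel_left _ hlpos, Nat.mul_div_cancel_left _ hlpos, ht.2.1]
  · rintro ⟨⟨d1, d2⟩, ℓ⟩ _; rfl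

lemma step6 (x Y : ℝ) (hx : 1 ≤ x) (hY1 : 1 ≤ Y) (hY2 : Y ≤ Real.sqrt x) :
    ∑ q ∈ (((Finset.Icc 1 ⌊x⌋₊) ×ˢ (Finset.Icc 1 ⌊x⌋₊)).filter
        (fun q => (q.1 : ℝ) * (q.2 : ℝ) ^ 2 ≤ x)).filter (fun q => ¬ Y < (q.2 : ℝ)),
        (moebius * moebius) q.2 * (q.1.divisors.card : ℤ)
    = ∑ ℓ ∈ Finset.Icc 1 ⌊Y⌋₊, (moebius * moebius) ℓ *
        ∑ n ∈ Finset.Icc 1 ⌊x / (ℓ : ℝ) ^ 2⌋₊, (n.divisors.card : ℤ) := by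
  have hx0 : (0:ℝ) ≤ x := by linarith
  have hsx : Real.sqrt x ≤ x := by
    nlinarith [Real.sq_sqrt hx0, Real.sqrt_nonneg x]
  have hrhs : ∑ ℓ ∈ Finset.Icc 1 ⌊Y⌋₊, (moebius * moebius) ℓ *
        ∑ n ∈ Finset.Icc 1 ⌊x / (ℓ : ℝ) ^ 2⌋₊, (n.divisors.card : ℤ)
      = ∑ s ∈ (Finset.Icc 1 ⌊Y⌋₊).sigma (fun ℓ => Finset.Icc 1 ⌊x / (ℓ : ℝ) ^ 2⌋₊),
          (moebius * moebius) s.1 * (s.2.divisors.card : ℤ) := by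
    rw [Finset.sum_sigma]
    exact Finset.sum_congr rfl fun ℓ _ => by rw [Finset.mul_sum]
  rw [hrhs]
  refine Finset.sum_nbij' (fun q => ⟨q.2, q.1⟩) (fun s => (s.2, s.1)) ?_ ?_ ?_ ?_ ?_
  · rintro ⟨m, ℓ⟩ hq
    simp only [Finset.mem_filter, Finset.mem_product, Finset.mem_Icc, not_lt] at hq
    obtain ⟨⟨⟨⟨hm1, _⟩, hl1, _⟩, hmx⟩, hlY⟩ := hq
    have hl0 : (0:ℝ) < (ℓ:ℝ)^2 := by positivity
    refine Finset.mem_sigma.2 ⟨Finset.mem_Icc.2 ⟨hl1, Nat.le_floor hlY⟩,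
      Finset.mem_Icc.2 ⟨hm1, Nat.le_floor ?_⟩⟩
    rw [le_div_iff₀ hl0]
    exact hmx
  · rintro ⟨ℓ, m⟩ hs
    simp only [Finset.mem_sigma, Finset.mem_Icc] at hs
    obtain ⟨⟨hl1, hlY⟩, hm1, hmf⟩ := hs
    have hY0 : (0:ℝ) ≤ Y := by linarith
    have hlY' : (ℓ:ℝ) ≤ Y :=
      le_trans (Nat.cast_le.2 hlY) (Nat.floor_le hY0)
    have hl0 : (0:ℝ) < (ℓ:ℝ)^2 := by
      have : (0:ℕ) < ℓ := hl1
      positivity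
    have hl2 : (1:ℝ) ≤ (ℓ:ℝ)^2 := by
      have : (1:ℝ) ≤ (ℓ:ℝ) := by exact_mod_cast hl1
      nlinarith
    have hmd : (m:ℝ) ≤ x / (ℓ:ℝ)^2 :=
      le_trans (Nat.cast_le.2 hmf) (Nat.floor_le (by positivity))
    have hmx : (m:ℝ) * (ℓ:ℝ)^2 ≤ x := by
      rw [← le_div_iff₀ hl0]; exact hmd
    have hmN : m ≤ ⌊x⌋₊ := Nat.le_floor (by nlinarith)
    have hlN : ℓ ≤ ⌊x⌋₊ := Nat.le_floor (by nlinarith)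
    exact Finset.mem_filter.2 ⟨Finset.mem_filter.2 ⟨Finset.mem_product.2
      ⟨Finset.mem_Icc.2 ⟨hm1, hmN⟩, Finset.mem_Icc.2 ⟨hl1, hlN⟩⟩, hmx⟩,
      not_lt.2 hlY'⟩
  · rintro ⟨m, ℓ⟩ _; rfl
  · rintro ⟨ℓ, m⟩ _; rfl
  · rintro ⟨m, ℓ⟩ _; rfl


/-- the splitting
`∑_{n ≤ x} f_μ(n) = ∑_{ℓ ≤ Y} (μ*μ)(ℓ) D(x/ℓ²) + ∑_{mℓ² ≤ x, ℓ > Y} (μ*μ)(ℓ) τ(m)`. -/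
theorem stmt17 (x Y : ℝ) (hx : 1 ≤ x) (hY1 : 1 ≤ Y) (hY2 : Y ≤ Real.sqrt x) :
    ∑ n ∈ Finset.Icc 1 ⌊x⌋₊, fmu n
    = (∑ ℓ ∈ Finset.Icc 1 ⌊Y⌋₊,
          (moebius * moebius) ℓ *
            ∑ n ∈ Finset.Icc 1 ⌊x / (ℓ : ℝ) ^ 2⌋₊, (n.divisors.card : ℤ))
      + ∑ p ∈ ((Finset.Icc 1 ⌊x⌋₊) ×ˢ (Finset.Icc 1 ⌊x⌋₊)).filter
            (fun p => (p.1 : ℝ) * (p.2 : ℝ) ^ 2 ≤ x ∧ Y < (p.2 : ℝ)),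
          (moebius * moebius) p.2 * (p.1.divisors.card : ℤ) := by
  rw [step1, step3 x hx,
    ← Finset.sum_filter_add_sum_filter_not
      (((Finset.Icc 1 ⌊x⌋₊) ×ˢ (Finset.Icc 1 ⌊x⌋₊)).filter
        (fun q => (q.1 : ℝ) * (q.2 : ℝ) ^ 2 ≤ x))
      (fun q => Y < (q.2 : ℝ)),
    step6 x Y hx hY1 hY2, Finset.filter_filter]
  exact add_comm _ _
end
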